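/- arXiv:1303.7297 — 9 statements merged into one kernel-verified Lean document; each statement's English description precedes it below -/
import Mathlib

section
/- Let q > 0, let G : ℝ → [0,1] be a cumulative distribution function, and let c_m ∈ ℝ, d_m > 0 be sequences such that m·G(c_m + d_m z) → exp_q(z) as m → ∞ for each z ∈ ℝ at which exp_q(z) is finite. Let F be a Borel probability measure on ℝ^p, fix α ∈ ℝ and β ∈ ℝ^p, and let A ⊆ ℝ^p be a compact set such that exp_q(α + βᵀx) is finite for every x ∈ A (i.e., 1 + (1−q)(α + βᵀx) > 0 for all x ∈ A when q > 1). Then m · ∫_A G(c_m + d_m(α + βᵀx)) F(dx) → ∫_A exp_q(α + βᵀx) F(dx) as m → ∞. -/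
open Filter Topology MeasureTheory

/-- The `q`-exponential function: `exp_q(z) = e^z` if `q = 1` and
`exp_q(z) = [1+(1-q)z]₊^{1/(1-q)}` if `q ≠ 1` (real-valued; on the set where
`exp_q` is finite, i.e. everywhere for `q ≤ 1` and where `1+(1-q)z > 0` for `q > 1`,
this coincides with the extended-real-valued definition). -/
noncomputable def qexp (q z : ℝ) : ℝ :=
  if q = 1 then Real.exp z else (max (1 + (1 - q) * z) 0) ^ (1 / (1 - q))

/-!
Since every `z ↦ m·G(c_m + d_m z)` is nonnegative and nondecreasing, on `A` it is bounded by
its value at a maximiser `x*` of the continuous function `x ↦ α + βᵀx` over the compact set `A`.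
These values converge, so they are bounded uniformly in `m`, and dominated convergence
(with a constant dominating function, integrable because `F` is finite on compact sets) gives the limit.
-/

theorem tendsto_setIntegral_comp_of_monotone_of_isCompact {X : Type*} [TopologicalSpace X]
    [MeasurableSpace X] [OpensMeasurableSpace X] [T2Space X] {μ : Measure X} [IsFiniteMeasureOnCompacts μ]
    {K : Set X} (hK : IsCompact K) {f : X → ℝ} (hf : Continuous f) {H : ℕ → ℝ → ℝ}
    {L : ℝ → ℝ} (hH_mono : ∀ m, Monotone (H m)) (hH_nonneg : ∀ m z, 0 ≤ H m z)
    (hH_lim : ∀ x ∈ K, Tendsto (fun m => H m (f x)) atTop (𝓝 (L (f x)))) :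
    Tendsto (fun m => ∫ x in K, H m (f x) ∂μ) atTop (𝓝 (∫ x in K, L (f x) ∂μ)) := by
  rcases K.eq_empty_or_nonempty with rfl | hK_ne
  · simp
  obtain ⟨xmax, hxmax_mem, hxmax⟩ := hK.exists_isMaxOn hK_ne hf.continuousOn
  obtain ⟨C, hC⟩ := (hH_lim xmax hxmax_mem).bddAbove_range
  have hK_meas : MeasurableSet K := hK.measurableSet
  have : IsFiniteMeasure (μ.restrict K) := isFiniteMeasure_restrict.2 hK.measure_lt_top.ne
  refine tendsto_integral_of_dominated_convergence (fun _ => C)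
    (fun m => ((hH_mono m).measurable.comp hf.measurable).aestronglyMeasurable)
    (integrable_const C) (fun m => ?_) ?_
  · filter_upwards [ae_restrict_mem hK_meas] with x hx
    rw [Real.norm_of_nonneg (hH_nonneg m _)]
    exact (hH_mono m (hxmax hx)).trans (hC ⟨m, rfl⟩)
  · filter_upwards [ae_restrict_mem hK_meas] with x hx
    exact hH_lim x hx

theorem imbalanced_limit_of_intensity_general
    (q : ℝ)
    (G : ℝ → ℝ)
    (hG_mono : Monotone G)
    (hG_range : ∀ x : ℝ, G x ∈ Set.Icc (0 : ℝ) 1)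
    (c : ℕ → ℝ) (d : ℕ → ℝ) (hd : ∀ m, 0 < d m)
    (hGEV : ∀ z : ℝ, (q ≤ 1 ∨ 0 < 1 + (1 - q) * z) →
      Tendsto (fun m : ℕ => (m : ℝ) * G (c m + d m * z)) atTop (𝓝 (qexp q z)))
    (p : ℕ) (F : Measure (Fin p → ℝ)) [IsProbabilityMeasure F]
    (α : ℝ) (β : Fin p → ℝ)
    (A : Set (Fin p → ℝ)) (hA : IsCompact A)
    (hfin : ∀ x ∈ A, q ≤ 1 ∨ 0 < 1 + (1 - q) * (α + ∑ i, β i * x i)) :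
    Tendsto
      (fun m : ℕ => (m : ℝ) * ∫ x in A, G (c m + d m * (α + ∑ i, β i * x i)) ∂F)
      atTop (𝓝 (∫ x in A, qexp q (α + ∑ i, β i * x i) ∂F)) := by
  simp_rw [← integral_const_mul]
  exact tendsto_setIntegral_comp_of_monotone_of_isCompact hA (by fun_prop)
    (fun m => (hG_mono.comp ((monotone_id.const_mul (hd m).le).const_add (c m))).const_mul
      m.cast_nonneg)
    (fun m z => mul_nonneg m.cast_nonneg (hG_range _).1)
    (fun x hx => hGEV _ (hfin x hx))

/-- Let `q > 0`, let `G : ℝ → [0,1]` be a cumulative distribution function,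
and let `c_m ∈ ℝ`, `d_m > 0` be sequences with `m·G(c_m + d_m z) → exp_q(z)` for each `z`
at which `exp_q(z)` is finite.  Let `F` be a Borel probability measure on `ℝ^p`, fix
`α ∈ ℝ`, `β ∈ ℝ^p`, and let `A` be a compact set with `exp_q(α + βᵀx)` finite on `A`.
Then `m · ∫_A G(c_m + d_m(α + βᵀx)) F(dx) → ∫_A exp_q(α + βᵀx) F(dx)`. -/
theorem imbalanced_limit_of_intensity
    (q : ℝ) (hq : 0 < q)
    (G : ℝ → ℝ)
    (hG_mono : Monotone G)
    (hG_right : ∀ x : ℝ, ContinuousWithinAt G (Set.Ici x) x)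
    (hG_range : ∀ x : ℝ, G x ∈ Set.Icc (0 : ℝ) 1)
    (hG_bot : Tendsto G atBot (𝓝 0))
    (hG_top : Tendsto G atTop (𝓝 1))
    (c : ℕ → ℝ) (d : ℕ → ℝ) (hd : ∀ m, 0 < d m)
    (hGEV : ∀ z : ℝ, (q ≤ 1 ∨ 0 < 1 + (1 - q) * z) →
      Tendsto (fun m : ℕ => (m : ℝ) * G (c m + d m * z)) atTop (𝓝 (qexp q z)))
    (p : ℕ) (F : Measure (Fin p → ℝ)) [IsProbabilityMeasure F]
    (α : ℝ) (β : Fin p → ℝ)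
    (A : Set (Fin p → ℝ)) (hA : IsCompact A)
    (hfin : ∀ x ∈ A, q ≤ 1 ∨ 0 < 1 + (1 - q) * (α + ∑ i, β i * x i)) :
    Tendsto
      (fun m : ℕ => (m : ℝ) * ∫ x in A, G (c m + d m * (α + ∑ i, β i * x i)) ∂F)
      atTop (𝓝 (∫ x in A, qexp q (α + ∑ i, β i * x i) ∂F)) :=
  imbalanced_limit_of_intensity_general q G hG_mono hG_range c d hd hGEV p F α β A hA hfin
end

section
/- Let q > 0, let G : ℝ → [0,1] be a cumulative distribution function, and let c_m ∈ ℝ, d_m > 0 be sequences such that m·G(c_m + d_m z) → exp_q(z) as m → ∞ for each z ∈ ℝ at which exp_q(z) is finite. Let F be a Borel probability measure on ℝ^p and fix α ∈ ℝ, β ∈ ℝ^p. For each m, let μ_m be the probability measure on ℝ^p × {0,1} determined by μ_m(A × {1}) = ∫_A G(c_m + d_m(α + βᵀx)) F(dx) and μ_m(A × {0}) = ∫_A (1 − G(c_m + d_m(α + βᵀx))) F(dx), and let (X_1,Y_1),…,(X_m,Y_m) be i.i.d. with law μ_m. Then for any positive integer J, any nonnegative integers n_1,…,n_J, and any mutually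 disjoint compact sets A_1,…,A_J ⊆ ℝ^p on each of which exp_q(α + βᵀx) is finite, lim_{m→∞} P( #{i ≤ m : X_i ∈ A_j, Y_i = 1} = n_j for all j = 1,…,J ) = ∏_{j=1}^J λ(A_j)^{n_j} e^{−λ(A_j)} / n_j!, where λ(A_j) = ∫_{A_j} exp_q(α + βᵀx) F(dx). That is, the points X_i with Y_i = 1 converge in law to a Poisson point process with intensity measure exp_q(α + βᵀx) F(dx). -/
/-!
Given `X_i = x`, the label is `Y_i = 1` with probability `G(c_m + d_m(α + βᵀx))`, so the counts
`#{i : X_i ∈ A_j, Y_i = 1}` are multinomial with cell probabilities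
`g_m(j) = ∫_{A_j} G(c_m + d_m(α + βᵀx)) F(dx)`. Splitting the event according to the disjoint
index sets realising the counts, of which there are `m^(N) / ∏ n_j!` (with `N = ∑ n_j` and `m^(N)`
the falling factorial), the probability in question is
`m^(N) / ∏ n_j! · ∏ g_m(j)^{n_j} · (1 - ∑ g_m(j))^{m - N}`. Since `G` is monotone, on the compact
set `A_j` the integrand `m G(c_m + d_m(α + βᵀx))` is dominated by its value at a maximiser of
`α + βᵀx`, so dominated convergence gives `m g_m(j) → λ(A_j)`. As in the law of small numbers,
`m^(N) ~ m^N` and `(1 - ∑ g_m(j))^{m - N} → exp(-∑ λ(A_j))`, which yields the product of Poisson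
probabilities.
-/

open Filter Topology MeasureTheory

open Finset Function Asymptotics

open Classical in
noncomputable def disjointFamilies {ι : Type*} (t : Finset ι) {J : ℕ} (n : Fin J → ℕ) :
    Finset (Fin J → Finset ι) :=
  {s ∈ Fintype.piFinset fun j => t.powersetCard (n j) | Pairwise (Disjoint on s)}

theorem mem_disjointFamilies {ι : Type*} {t : Finset ι} {J : ℕ} {n : Fin J → ℕ}
    {s : Fin J → Finset ι} :
    s ∈ disjointFamilies t n ↔ (∀ j, s j ⊆ t ∧ #(s j) = n j) ∧ Pairwise (Disjoint on s) := by
  simp [disjointFamilies]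

theorem cons_mem_disjointFamilies {ι : Type*} [DecidableEq ι] {t : Finset ι} {J : ℕ}
    {n : Fin (J + 1) → ℕ} {s₀ : Finset ι} {s : Fin J → Finset ι} :
    (Fin.cons s₀ s : Fin (J + 1) → Finset ι) ∈ disjointFamilies t n ↔
      s₀ ∈ t.powersetCard (n 0) ∧ s ∈ disjointFamilies (t \ s₀) (Fin.tail n) := by
  simp only [mem_disjointFamilies, mem_powersetCard, Fin.forall_fin_succ, Fin.cons_zero,
    Fin.cons_succ, Fin.tail, pairwise_fin_succ_iff, Function.onFun, subset_sdiff]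
  grind

theorem card_disjointFamilies_mul_prod_factorial {ι : Type*} [DecidableEq ι] (t : Finset ι)
    {J : ℕ} (n : Fin J → ℕ) :
    #(disjointFamilies t n) * ∏ j, (n j).factorial = (#t).descFactorial (∑ j, n j) := by
  induction J generalizing t with
  | zero =>
    have : disjointFamilies t n = {Fin.elim0} := by
      ext s
      simp [mem_disjointFamilies, Subsingleton.elim s Fin.elim0, Pairwise]
    simp [this]
  | succ J ih =>
    have hcard : #(disjointFamilies t n) =
        ∑ s₀ ∈ t.powersetCard (n 0), #(disjointFamilies (t \ s₀) (Fin.tail n)) := by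
      rw [← card_sigma]
      refine card_nbij' (fun s => ⟨s 0, Fin.tail s⟩) (fun p => Fin.cons p.1 p.2) ?_ ?_ ?_ ?_
      · intro s hs
        rw [mem_coe, ← Fin.cons_self_tail s, cons_mem_disjointFamilies] at hs
        simpa using hs
      · rintro ⟨s₀, s⟩ h
        simpa [cons_mem_disjointFamilies] using h
      · intro s _
        simp
      · rintro ⟨s₀, s⟩ _
        simp
    have hfiber : ∀ s₀ ∈ t.powersetCard (n 0),
        #(disjointFamilies (t \ s₀) (Fin.tail n)) * ∏ j, (Fin.tail n j).factorial =
          (#t - n 0).descFactorial (∑ j, Fin.tail n j) := by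
      intro s₀ hs₀
      rw [mem_powersetCard] at hs₀
      rw [ih, card_sdiff_of_subset hs₀.1, hs₀.2]
    calc #(disjointFamilies t n) * ∏ j, (n j).factorial
        = ∑ s₀ ∈ t.powersetCard (n 0),
            #(disjointFamilies (t \ s₀) (Fin.tail n)) * (∏ j, (Fin.tail n j).factorial) *
              (n 0).factorial := by
          rw [Fin.prod_univ_succ, hcard, sum_mul]
          exact sum_congr rfl fun _ _ => by simp only [Fin.tail]; ring
      _ = (#t - n 0).descFactorial (∑ j, Fin.tail n j) *
            ((n 0).factorial * (#t).choose (n 0)) := by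
          rw [sum_congr rfl fun s₀ hs₀ => by rw [hfiber s₀ hs₀], sum_const, card_powersetCard,
            smul_eq_mul]
          ring
      _ = (#t).descFactorial (∑ j, n j) := by
          rw [← Nat.descFactorial_eq_factorial_mul_choose, Fin.sum_univ_succ,
            ← Nat.descFactorial_mul_descFactorial (Nat.le_add_right _ _), Nat.add_sub_cancel_left]
          rfl

section Multinomial

variable {X ι : Type*} {J : ℕ} {B : Fin J → Set X}

theorem setOf_forall_mem_iff_mem_eq_of_mem (hB : Pairwise (Disjoint on B))
    {s : Fin J → Finset ι} (hs : Pairwise (Disjoint on s)) {i : ι} {j : Fin J} (hi : i ∈ s j) :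
    {x | ∀ k, x ∈ B k ↔ i ∈ s k} = B j := by
  refine Set.Subset.antisymm (fun x hx => (hx j).2 hi) fun x hx k => ?_
  rcases eq_or_ne k j with rfl | hkj
  · exact iff_of_true hx hi
  · exact iff_of_false (Set.disjoint_right.1 (hB hkj) hx) (Finset.disjoint_right.1 (hs hkj) hi)

theorem setOf_forall_mem_iff_mem_eq_compl {s : Fin J → Finset ι} {i : ι} (hi : ∀ k, i ∉ s k) :
    {x | ∀ k, x ∈ B k ↔ i ∈ s k} = (⋃ k, B k)ᶜ := by
  ext x
  simp [hi]

theorem prod_measureReal_setOf_forall_mem_iff_mem [MeasurableSpace X] [Fintype ι] [DecidableEq ι]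
    (ν : Measure X) [IsProbabilityMeasure ν] (hBm : ∀ j, MeasurableSet (B j))
    (hB : Pairwise (Disjoint on B)) {n : Fin J → ℕ} {s : Fin J → Finset ι}
    (hs : s ∈ disjointFamilies univ n) :
    ∏ i, ν.real {x | ∀ k, x ∈ B k ↔ i ∈ s k} =
      (∏ j, ν.real (B j) ^ n j) * (1 - ∑ j, ν.real (B j)) ^ (Fintype.card ι - ∑ j, n j) := by
  obtain ⟨hcard, hs⟩ := mem_disjointFamilies.1 hs
  have hsU : ((univ : Finset (Fin J)) : Set (Fin J)).PairwiseDisjoint s := hs.set_pairwise _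
  set U := univ.biUnion s
  have hU : ∏ i ∈ U, ν.real {x | ∀ k, x ∈ B k ↔ i ∈ s k} = ∏ j, ν.real (B j) ^ n j := by
    rw [prod_biUnion hsU]
    refine prod_congr rfl fun j _ => ?_
    rw [prod_congr rfl fun i hi => by rw [setOf_forall_mem_iff_mem_eq_of_mem hB hs hi],
      prod_const, (hcard j).2]
  have hUc : ∏ i ∈ univ \ U, ν.real {x | ∀ k, x ∈ B k ↔ i ∈ s k} =
      (1 - ∑ j, ν.real (B j)) ^ (Fintype.card ι - ∑ j, n j) := by
    have hrest : ν.real (⋃ k, B k)ᶜ = 1 - ∑ j, ν.real (B j) := by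
      rw [probReal_compl_eq_one_sub (MeasurableSet.iUnion hBm), measureReal_iUnion_fintype hB hBm]
    rw [prod_congr rfl fun i hi => by
        rw [setOf_forall_mem_iff_mem_eq_compl fun k hk =>
          (mem_sdiff.1 hi).2 (mem_biUnion.2 ⟨k, mem_univ k, hk⟩), hrest],
      prod_const, card_sdiff_of_subset (subset_univ U), card_biUnion hsU, card_univ]
    simp only [fun j => (hcard j).2]
  rw [← prod_sdiff (subset_univ U), hU, hUc, mul_comm]

theorem measurableSet_setOf_forall_mem_iff [MeasurableSpace X] (hBm : ∀ j, MeasurableSet (B j))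
    (P : Fin J → Prop) : MeasurableSet {x | ∀ k, x ∈ B k ↔ P k} := by
  rw [Set.ofPred_forall]
  refine .iInter fun k => ?_
  by_cases h : P k
  · simpa [h] using hBm k
  · simpa [h] using (hBm k).compl.mem

theorem measureReal_pi_forall_ncard_eq [MeasurableSpace X] (ν : Measure X)
    [IsProbabilityMeasure ν] (hBm : ∀ j, MeasurableSet (B j)) (hB : Pairwise (Disjoint on B))
    (n : Fin J → ℕ) (m : ℕ) :
    (Measure.pi fun _ : Fin m => ν).real {ω | ∀ j, {i | ω i ∈ B j}.ncard = n j} =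
      (m.descFactorial (∑ j, n j) : ℝ) / (∏ j, ((n j).factorial : ℝ)) *
        (∏ j, ν.real (B j) ^ n j) * (1 - ∑ j, ν.real (B j)) ^ (m - ∑ j, n j) := by
  classical
  set fibers : (Fin m → X) → Fin J → Finset (Fin m) := fun ω j => {i | ω i ∈ B j}
  have hevent : {ω : Fin m → X | ∀ j, {i | ω i ∈ B j}.ncard = n j} =
      fibers ⁻¹' ↑(disjointFamilies (univ : Finset (Fin m)) n) := by
    ext ω
    have hdisj : Pairwise (Disjoint on fibers ω) := fun j k hjk =>
      disjoint_filter.2 fun i _ hj hk => Set.disjoint_left.1 (hB hjk) hj hk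
    simp [mem_disjointFamilies, hdisj, fibers, Set.ncard_eq_toFinset_card']
  have hbox : ∀ s ∈ disjointFamilies (univ : Finset (Fin m)) n,
      fibers ⁻¹' {s} = Set.univ.pi fun i => {x | ∀ k, x ∈ B k ↔ i ∈ s k} := by
    intro s _
    ext ω
    simp only [Set.mem_preimage, Set.mem_singleton_iff, funext_iff, Finset.ext_iff, fibers,
      mem_filter_univ, Set.mem_univ_pi, Set.mem_ofPred_eq]
    exact forall_comm
  rw [hevent, ← sum_measureReal_preimage_singleton _ fun s hs => by
    rw [hbox s hs]
    exact .univ_pi fun i => measurableSet_setOf_forall_mem_iff hBm _]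
  have hterm : ∀ s ∈ disjointFamilies (univ : Finset (Fin m)) n,
      (Measure.pi fun _ : Fin m => ν).real (fibers ⁻¹' {s}) =
        (∏ j, ν.real (B j) ^ n j) * (1 - ∑ j, ν.real (B j)) ^ (m - ∑ j, n j) := by
    intro s hs
    rw [hbox s hs, measureReal_def, Measure.pi_pi, ENNReal.toReal_prod]
    have := prod_measureReal_setOf_forall_mem_iff_mem ν hBm hB hs
    rwa [Fintype.card_fin] at this
  have hcard : (#(disjointFamilies (univ : Finset (Fin m)) n) : ℝ) =
      m.descFactorial (∑ j, n j) / ∏ j, ((n j).factorial : ℝ) := by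
    rw [eq_div_iff (prod_ne_zero_iff.2 fun j _ => by positivity)]
    exact_mod_cast (card_disjointFamilies_mul_prod_factorial univ n).trans (by rw [card_fin])
  rw [sum_congr rfl hterm, sum_const, nsmul_eq_mul, hcard, mul_assoc]

end Multinomial

theorem tendsto_one_sub_pow_sub_of_tendsto_mul {a : ℕ → ℝ} {t : ℝ} (k : ℕ)
    (h : Tendsto (fun m : ℕ => m * a m) atTop (𝓝 t)) :
    Tendsto (fun m : ℕ => (1 - a m) ^ (m - k)) atTop (𝓝 (Real.exp (-t))) := by
  have ha : Tendsto a atTop (𝓝 0) := ProbabilityTheory.tendsto_zero_of_tendsto_mul_atTop h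
  have hpow : Tendsto (fun m : ℕ => (1 - a m) ^ m) atTop (𝓝 (Real.exp (-t))) := by
    simpa [sub_eq_add_neg] using Real.tendsto_one_add_pow_exp_of_tendsto (by simpa using h.neg)
  have hk : Tendsto (fun m : ℕ => ((1 - a m) ^ k)⁻¹) atTop (𝓝 1) := by
    simpa using ((tendsto_const_nhds.sub ha).pow k).inv₀ (by simp : (1 - 0 : ℝ) ^ k ≠ 0)
  refine (mul_one (Real.exp (-t)) ▸ hpow.mul hk).congr' ?_
  filter_upwards [eventually_ge_atTop k, ha.eventually (gt_mem_nhds one_pos)] with m hkm ham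
  rw [pow_sub₀ _ (by linarith) hkm]

theorem tendsto_descFactorial_mul_prod_pow_of_tendsto_mul {J : ℕ} {p : ℕ → Fin J → ℝ}
    {r : Fin J → ℝ} (n : Fin J → ℕ) (hr : ∀ j, Tendsto (fun m : ℕ => m * p m j) atTop (𝓝 (r j))) :
    Tendsto (fun m : ℕ => (m.descFactorial (∑ j, n j) : ℝ) * ∏ j, p m j ^ n j) atTop
      (𝓝 (∏ j, r j ^ n j)) := by
  have hequiv : (fun m : ℕ => (m.descFactorial (∑ j, n j) : ℝ) * ∏ j, p m j ^ n j) ~[atTop]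
      fun m => ∏ j, ((m : ℝ) * p m j) ^ n j := by
    refine ((isEquivalent_descFactorial _).mul IsEquivalent.refl).congr_right (.of_eq ?_)
    ext m
    simp only [Pi.mul_apply, mul_pow, prod_mul_distrib, prod_pow_eq_pow_sum]
  exact hequiv.tendsto_nhds_iff.2 (tendsto_finsetProd _ fun j _ => (hr j).pow (n j))

theorem tendsto_multinomial_poisson_of_tendsto_mul {J : ℕ} {p : ℕ → Fin J → ℝ}
    {r : Fin J → ℝ} (n : Fin J → ℕ) (hr : ∀ j, Tendsto (fun m : ℕ => m * p m j) atTop (𝓝 (r j))) :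
    Tendsto (fun m : ℕ => (m.descFactorial (∑ j, n j) : ℝ) / (∏ j, ((n j).factorial : ℝ)) *
        (∏ j, p m j ^ n j) * (1 - ∑ j, p m j) ^ (m - ∑ j, n j)) atTop
      (𝓝 (∏ j, r j ^ n j * Real.exp (-r j) / (n j).factorial)) := by
  have hsum : Tendsto (fun m : ℕ => m * ∑ j, p m j) atTop (𝓝 (∑ j, r j)) := by
    simpa only [mul_sum] using tendsto_finsetSum _ fun j _ => hr j
  have := ((tendsto_descFactorial_mul_prod_pow_of_tendsto_mul n hr).div_const
    (∏ j, ((n j).factorial : ℝ))).mul (tendsto_one_sub_pow_sub_of_tendsto_mul (∑ j, n j) hsum)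
  convert this using 2 with m
  · ring
  · rw [← sum_neg_distrib, Real.exp_sum, div_mul_eq_mul_div, ← prod_mul_distrib,
      ← prod_div_distrib]

theorem tendsto_setIntegral_comp_of_monotone {X : Type*} [TopologicalSpace X] [T2Space X]
    [MeasurableSpace X] [OpensMeasurableSpace X] {μ : Measure X} [IsFiniteMeasureOnCompacts μ]
    {A : Set X} (hA : IsCompact A) {ℓ : X → ℝ} (hℓ : ContinuousOn ℓ A) {H : ℕ → ℝ → ℝ}
    (hH : ∀ m, Monotone (H m)) (hH0 : ∀ m z, 0 ≤ H m z) {g : X → ℝ}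
    (hlim : ∀ x ∈ A, Tendsto (fun m => H m (ℓ x)) atTop (𝓝 (g x))) :
    Tendsto (fun m => ∫ x in A, H m (ℓ x) ∂μ) atTop (𝓝 (∫ x in A, g x ∂μ)) := by
  rcases A.eq_empty_or_nonempty with rfl | hne
  · simp
  have hAm : MeasurableSet A := hA.measurableSet
  obtain ⟨x₀, hx₀, hmax⟩ := hA.exists_isMaxOn hne hℓ
  obtain ⟨M, hM⟩ := (hlim x₀ hx₀).bddAbove_range
  refine tendsto_integral_of_dominated_convergence (fun _ => M) (fun m => ?_)
    (integrableOn_const hA.measure_lt_top.ne) (fun m => ?_) (ae_restrict_of_forall_mem hAm hlim)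
  · exact ((hH m).measurable.comp_aemeasurable
      (hℓ.aestronglyMeasurable hAm).aemeasurable).aestronglyMeasurable
  · refine ae_restrict_of_forall_mem hAm fun x hx => ?_
    rw [Real.norm_of_nonneg (hH0 m _)]
    exact (hH m (hmax hx)).trans (hM ⟨m, rfl⟩)

theorem binomial_regression_tendsto_poisson_point_process_general
    (q : ℝ)
    (G : ℝ → ℝ)
    (hG_mono : Monotone G)
    (hG_range : ∀ x : ℝ, G x ∈ Set.Icc (0 : ℝ) 1)
    (c : ℕ → ℝ) (d : ℕ → ℝ) (hd : ∀ m, 0 < d m)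
    (hGEV : ∀ z : ℝ, (q ≤ 1 ∨ 0 < 1 + (1 - q) * z) →
      Tendsto (fun m : ℕ => (m : ℝ) * G (c m + d m * z)) atTop (𝓝 (qexp q z)))
    (p : ℕ) (F : Measure (Fin p → ℝ)) [IsProbabilityMeasure F]
    (α : ℝ) (β : Fin p → ℝ)
    -- the law `μ m` of one observation `(X_i, Y_i)` under the true parameter
    (μ : ℕ → Measure ((Fin p → ℝ) × Bool))
    (hμprob : ∀ m, IsProbabilityMeasure (μ m))
    (hμ1 : ∀ m, ∀ S : Set (Fin p → ℝ), MeasurableSet S →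
      μ m (S ×ˢ ({true} : Set Bool)) =
        ENNReal.ofReal (∫ x in S, G (c m + d m * (α + ∑ i, β i * x i)) ∂F))
    (J : ℕ)
    (n : Fin J → ℕ)
    (A : Fin J → Set (Fin p → ℝ))
    (hA_compact : ∀ j, IsCompact (A j))
    (hA_disj : ∀ j k, j ≠ k → Disjoint (A j) (A k))
    (hfin : ∀ j, ∀ x ∈ A j, q ≤ 1 ∨ 0 < 1 + (1 - q) * (α + ∑ i, β i * x i)) :
    Tendsto
      (fun m : ℕ =>
        ((Measure.pi fun _ : Fin m => μ m)
            {ω : Fin m → (Fin p → ℝ) × Bool |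
              ∀ j, {i : Fin m | (ω i).1 ∈ A j ∧ (ω i).2 = true}.ncard = n j}).toReal)
      atTop
      (𝓝 (∏ j, (∫ x in A j, qexp q (α + ∑ i, β i * x i) ∂F) ^ (n j) *
            Real.exp (-(∫ x in A j, qexp q (α + ∑ i, β i * x i) ∂F)) /
            (Nat.factorial (n j)))) := by
  set ℓ : (Fin p → ℝ) → ℝ := fun x => α + ∑ i, β i * x i
  have hAm : ∀ j, MeasurableSet (A j) := fun j => (hA_compact j).measurableSet
  set B : Fin J → Set ((Fin p → ℝ) × Bool) := fun j => A j ×ˢ {true}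
  have hB : ∀ m j, (μ m).real (B j) = ∫ x in A j, G (c m + d m * ℓ x) ∂F := fun m j => by
    rw [measureReal_def, hμ1 m _ (hAm j),
      ENNReal.toReal_ofReal (setIntegral_nonneg (hAm j) fun x _ => (hG_range _).1)]
  have hlim : ∀ j, Tendsto (fun m : ℕ => m * (μ m).real (B j)) atTop
      (𝓝 (∫ x in A j, qexp q (ℓ x) ∂F)) := by
    intro j
    simp only [hB, ← integral_const_mul]
    refine tendsto_setIntegral_comp_of_monotone (hA_compact j) (by fun_prop)
      (H := fun m z => m * G (c m + d m * z)) (fun m z w hzw => ?_)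
      (fun m z => mul_nonneg m.cast_nonneg (hG_range _).1) (fun x hx => hGEV _ (hfin j x hx))
    exact mul_le_mul_of_nonneg_left (hG_mono (by gcongr; exact (hd m).le)) m.cast_nonneg
  refine (tendsto_multinomial_poisson_of_tendsto_mul n hlim).congr fun m => ?_
  have := hμprob m
  exact (measureReal_pi_forall_ncard_eq (μ m) (fun j => (hAm j).prod (measurableSet_singleton _))
    (fun j k hjk => Set.disjoint_prod.2 (Or.inl (hA_disj j k hjk))) n m).symm

/-- imbalanced binomial regression converges in law to the Poisson
point process with intensity measure `exp_q(α + βᵀx) F(dx)`.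
Let `q > 0`, `G` a cdf satisfying the GEV assumption with sequences `c_m, d_m`,
`F` a Borel probability measure on `ℝ^p`, `α, β` fixed; for each `m` let `μ_m`
be the law on `ℝ^p × {0,1}` of a single observation `(X_i, Y_i)` and consider
`m` i.i.d. copies.  Then for disjoint compact sets `A_1, …, A_J` on which
`exp_q(α+βᵀx)` is finite and nonnegative integers `n_1, …, n_J`,
`P(#{i : X_i ∈ A_j, Y_i = 1} = n_j ∀j) → ∏_j λ(A_j)^{n_j} e^{-λ(A_j)} / n_j!`,
where `λ(A_j) = ∫_{A_j} exp_q(α+βᵀx) F(dx)`. -/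
theorem binomial_regression_tendsto_poisson_point_process
    (q : ℝ) (hq : 0 < q)
    (G : ℝ → ℝ)
    (hG_mono : Monotone G)
    (hG_right : ∀ x : ℝ, ContinuousWithinAt G (Set.Ici x) x)
    (hG_range : ∀ x : ℝ, G x ∈ Set.Icc (0 : ℝ) 1)
    (hG_bot : Tendsto G atBot (𝓝 0))
    (hG_top : Tendsto G atTop (𝓝 1))
    (c : ℕ → ℝ) (d : ℕ → ℝ) (hd : ∀ m, 0 < d m)
    (hGEV : ∀ z : ℝ, (q ≤ 1 ∨ 0 < 1 + (1 - q) * z) →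
      Tendsto (fun m : ℕ => (m : ℝ) * G (c m + d m * z)) atTop (𝓝 (qexp q z)))
    (p : ℕ) (F : Measure (Fin p → ℝ)) [IsProbabilityMeasure F]
    (α : ℝ) (β : Fin p → ℝ)
    -- the law `μ m` of one observation `(X_i, Y_i)` under the true parameter
    (μ : ℕ → Measure ((Fin p → ℝ) × Bool))
    (hμprob : ∀ m, IsProbabilityMeasure (μ m))
    (hμ1 : ∀ m, ∀ S : Set (Fin p → ℝ), MeasurableSet S →
      μ m (S ×ˢ ({true} : Set Bool)) =
        ENNReal.ofReal (∫ x in S, G (c m + d m * (α + ∑ i, β i * x i)) ∂F))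
    (hμ0 : ∀ m, ∀ S : Set (Fin p → ℝ), MeasurableSet S →
      μ m (S ×ˢ ({false} : Set Bool)) =
        ENNReal.ofReal (∫ x in S, (1 - G (c m + d m * (α + ∑ i, β i * x i))) ∂F))
    (J : ℕ) (hJ : 0 < J)
    (n : Fin J → ℕ)
    (A : Fin J → Set (Fin p → ℝ))
    (hA_compact : ∀ j, IsCompact (A j))
    (hA_disj : ∀ j k, j ≠ k → Disjoint (A j) (A k))
    (hfin : ∀ j, ∀ x ∈ A j, q ≤ 1 ∨ 0 < 1 + (1 - q) * (α + ∑ i, β i * x i)) :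
    Tendsto
      (fun m : ℕ =>
        ((Measure.pi fun _ : Fin m => μ m)
            {ω : Fin m → (Fin p → ℝ) × Bool |
              ∀ j, {i : Fin m | (ω i).1 ∈ A j ∧ (ω i).2 = true}.ncard = n j}).toReal)
      atTop
      (𝓝 (∏ j, (∫ x in A j, qexp q (α + ∑ i, β i * x i) ∂F) ^ (n j) *
            Real.exp (-(∫ x in A j, qexp q (α + ∑ i, β i * x i) ∂F)) /
            (Nat.factorial (n j)))) :=
  binomial_regression_tendsto_poisson_point_process_general q G hG_mono hG_range c d hd hGEV p F α β
    μ hμprob hμ1 J n A hA_compact hA_disj hfin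
end

section
/- For every t ∈ ℝ and every z ∈ ℝ, there exists a unique γ ∈ ℝ such that exp_t(z − γ) + exp_t(−γ) = 1 (where the equation is understood in [0,∞], so neither term may be infinite). -/
/-!
On `ℝ`, `exp_t` is a continuous monotone map into `[0,∞]` with `exp_t 0 = 1` and `exp_t x = 1/2`
for some `x`. Hence `γ ↦ exp_t(z - γ) + exp_t(-γ)` is continuous and antitone, at least `1` at
`γ = 0` and at most `1` for large `γ`, and the intermediate value theorem (in `[0,∞]`) gives a
solution. Since `exp_t` is strictly increasing up to any point where its value lies in `(0,∞)`,
the sum drops strictly below `1` to the right of any solution, which gives uniqueness.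
-/

open ENNReal

/-- The `t`-exponential function, with values in `[0,∞]`:
`exp_t(z) = e^z` if `t = 1` and `exp_t(z) = [1+(1-t)z]₊^{1/(1-t)}` if `t ≠ 1`,
where `[0]₊^r = ∞` when the exponent `r` is negative (this convention is built
into `ENNReal.rpow`: `0 ^ r = ∞` for `r < 0`). -/
noncomputable def qexpE (t z : ℝ) : ℝ≥0∞ :=
  if t = 1 then ENNReal.ofReal (Real.exp z)
  else (ENNReal.ofReal (1 + (1 - t) * z)) ^ (1 / (1 - t))

section

variable {t : ℝ}

lemma qexpE_of_ne_one (ht : t ≠ 1) (x : ℝ) :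
    qexpE t x = ENNReal.ofReal (1 + (1 - t) * x) ^ (1 / (1 - t)) :=
  if_neg ht

lemma qexpE_of_one_lt (ht : 1 < t) (x : ℝ) :
    qexpE t x = (ENNReal.ofReal (1 + (1 - t) * x) ^ (1 / (t - 1)))⁻¹ := by
  rw [qexpE_of_ne_one ht.ne', ← ENNReal.rpow_neg, ← div_neg, neg_sub]

variable (t) in
lemma qexpE_zero : qexpE t 0 = 1 := by
  by_cases ht : t = 1 <;> simp [qexpE, ht]

variable (t) in
@[fun_prop]
lemma continuous_qexpE : Continuous (qexpE t) := by
  unfold qexpE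
  split_ifs
  · exact ENNReal.continuous_ofReal.comp Real.continuous_exp
  · exact ENNReal.continuous_rpow_const.comp (ENNReal.continuous_ofReal.comp (by fun_prop))

variable (t) in
lemma monotone_qexpE : Monotone (qexpE t) := by
  intro a b hab
  rcases lt_trichotomy t 1 with ht | rfl | ht
  · simp only [qexpE_of_ne_one ht.ne]
    exact ENNReal.rpow_le_rpow (ENNReal.ofReal_le_ofReal (by nlinarith))
      (one_div_nonneg.mpr (by linarith))
  · simpa [qexpE] using ENNReal.ofReal_le_ofReal (Real.exp_le_exp.mpr hab)
  · rw [qexpE_of_one_lt ht, qexpE_of_one_lt ht]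
    exact ENNReal.inv_le_inv.mpr (ENNReal.rpow_le_rpow (ENNReal.ofReal_le_ofReal (by nlinarith))
      (one_div_nonneg.mpr (by linarith)))

lemma qexpE_lt_qexpE {a b : ℝ} (hab : a < b) (hb : qexpE t b ≠ 0) (hb' : qexpE t b ≠ ∞) :
    qexpE t a < qexpE t b := by
  rcases lt_trichotomy t 1 with ht | rfl | ht
  · simp only [qexpE_of_ne_one ht.ne] at hb ⊢
    have hb_pos : 0 < 1 + (1 - t) * b := by
      by_contra! h
      rw [ENNReal.ofReal_eq_zero.mpr h, ENNReal.zero_rpow_of_pos (one_div_pos.mpr (by linarith))] at hb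
      exact hb rfl
    exact ENNReal.rpow_lt_rpow ((ENNReal.ofReal_lt_ofReal_iff hb_pos).mpr (by nlinarith))
      (one_div_pos.mpr (by linarith))
  · simpa [qexpE] using (ENNReal.ofReal_lt_ofReal_iff (Real.exp_pos b)).mpr (Real.exp_lt_exp.mpr hab)
  · have ha := ne_top_of_le_ne_top hb' (monotone_qexpE t hab.le)
    rw [qexpE_of_ne_one ht.ne'] at ha
    rw [qexpE_of_one_lt ht, qexpE_of_one_lt ht]
    have ha_pos : 0 < 1 + (1 - t) * a := by
      by_contra! h
      rw [ENNReal.ofReal_eq_zero.mpr h, ENNReal.zero_rpow_of_neg (one_div_neg.mpr (by linarith))] at ha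
      exact ha rfl
    exact ENNReal.inv_lt_inv.mpr (ENNReal.rpow_lt_rpow
      ((ENNReal.ofReal_lt_ofReal_iff ha_pos).mpr (by nlinarith)) (one_div_pos.mpr (by linarith)))

variable (t) in
lemma exists_qexpE_eq_half : ∃ x, qexpE t x = 2⁻¹ := by
  by_cases ht : t = 1
  · refine ⟨-Real.log 2, ?_⟩
    simp [qexpE, ht, Real.exp_neg, Real.exp_log]
  · have hs : 1 - t ≠ 0 := sub_ne_zero.mpr (Ne.symm ht)
    refine ⟨((2⁻¹ : ℝ) ^ (1 - t) - 1) / (1 - t), ?_⟩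
    have hbase : 1 + (1 - t) * (((2⁻¹ : ℝ) ^ (1 - t) - 1) / (1 - t)) = (2⁻¹ : ℝ) ^ (1 - t) := by
      field_simp; ring
    rw [qexpE_of_ne_one ht, hbase, ENNReal.ofReal_rpow_of_pos (by positivity), one_div,
      Real.rpow_rpow_inv (by norm_num) hs, ENNReal.ofReal_inv_of_pos two_pos]
    simp

lemma qexpE_add_qexpE_lt_one {a b a' b' : ℝ} (ha : a' < a) (hb : b' < b)
    (h : qexpE t a + qexpE t b = 1) : qexpE t a' + qexpE t b' < 1 := by
  have ha_top : qexpE t a ≠ ∞ := ne_top_of_le_ne_top one_ne_top (h ▸ le_self_add)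
  have hb_top : qexpE t b ≠ ∞ := ne_top_of_le_ne_top one_ne_top (h ▸ le_add_self)
  have ha_le := monotone_qexpE t ha.le
  have hb_le := monotone_qexpE t hb.le
  rw [← h]
  by_cases ha0 : qexpE t a = 0
  · have hb0 : qexpE t b ≠ 0 := by
      rintro hb0
      simp [ha0, hb0] at h
    exact ENNReal.add_lt_add_of_le_of_lt (ne_top_of_le_ne_top ha_top ha_le) ha_le
      (qexpE_lt_qexpE hb hb0 hb_top)
  · exact ENNReal.add_lt_add_of_lt_of_le (ne_top_of_le_ne_top hb_top hb_le)
      (qexpE_lt_qexpE ha ha0 ha_top) hb_le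

end

/-- for every `t ∈ ℝ` and every `z ∈ ℝ` there exists a unique
`γ ∈ ℝ` with `exp_t(z - γ) + exp_t(-γ) = 1` (equation in `[0,∞]`, so neither
term may be infinite). -/
theorem t_logistic_normalizer_exists_unique (t z : ℝ) :
    ∃! γ : ℝ, qexpE t (z - γ) + qexpE t (-γ) = 1 := by
  set F : ℝ → ℝ≥0∞ := fun γ => qexpE t (z - γ) + qexpE t (-γ)
  have hF_cont : Continuous F := by fun_prop
  have hF_lt : ∀ γ γ', γ < γ' → F γ = 1 → F γ' < 1 := fun γ γ' h hγ =>
    qexpE_add_qexpE_lt_one (by linarith) (by linarith) hγ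
  have hF_zero : 1 ≤ F 0 := by simp only [F, neg_zero, qexpE_zero, le_add_self]
  obtain ⟨x, hx⟩ := exists_qexpE_eq_half t
  have hF_large : F (max (z - x) (-x)) ≤ 1 := by
    rw [← ENNReal.inv_two_add_inv_two, ← hx]
    exact add_le_add (monotone_qexpE t (by linarith [le_max_left (z - x) (-x)]))
      (monotone_qexpE t (by linarith [le_max_right (z - x) (-x)]))
  obtain ⟨γ, hγ⟩ := intermediate_value_univ _ 0 hF_cont ⟨hF_large, hF_zero⟩
  refine ⟨γ, hγ, fun γ' hγ' => ?_⟩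
  rcases lt_trichotomy γ' γ with h | rfl | h
  · exact absurd hγ (hF_lt γ' γ h hγ').ne
  · rfl
  · exact absurd hγ' (hF_lt γ γ' h hγ).ne
end

section
/- For every t ∈ ℝ, the t-logistic distribution function satisfies the symmetry G_t(−z) = 1 − G_t(z) for all z ∈ ℝ; equivalently, γ_t(−z) = −z + γ_t(z) for all z ∈ ℝ. -/
open ENNReal

/-! The normalising equation `exp_t(z - γ) + exp_t(-γ) = 1` has at most one solution `γ`, because
`exp_t` is strictly increasing wherever it is neither `0` nor `∞`. Swapping its two terms shows
that `-z + γ_t(z)` solves the equation at `-z`, hence equals `γ_t(-z)`, and then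
`G_t(-z) = exp_t(-γ_t(z)) = 1 - G_t(z)`. -/

theorem qexpE_lt_qexpE_s4 {t x y : ℝ} (hxy : x < y) (hx : qexpE t x ≠ 0) (hy : qexpE t y ≠ ∞) :
    qexpE t x < qexpE t y := by
  unfold qexpE at *
  split_ifs at * with ht
  · exact (ENNReal.ofReal_lt_ofReal_iff (Real.exp_pos y)).2 (Real.exp_lt_exp.2 hxy)
  rcases lt_or_gt_of_ne (sub_ne_zero.2 (Ne.symm ht)) with hneg | hpos
  · have hby : 0 < 1 + (1 - t) * y := by
      by_contra! h
      exact hy (ENNReal.rpow_eq_top_iff.2 (.inl ⟨ENNReal.ofReal_eq_zero.2 h,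
        one_div_neg.2 hneg⟩))
    have hbxy : 1 + (1 - t) * y < 1 + (1 - t) * x := by nlinarith
    rw [ENNReal.ofReal_rpow_of_pos hby, ENNReal.ofReal_rpow_of_pos (hby.trans hbxy),
      ENNReal.ofReal_lt_ofReal_iff (Real.rpow_pos_of_pos hby _)]
    exact Real.rpow_lt_rpow_of_neg hby hbxy (one_div_neg.2 hneg)
  · have hbx : 0 < 1 + (1 - t) * x := by
      by_contra! h
      exact hx (ENNReal.rpow_eq_zero_iff.2 (.inl ⟨ENNReal.ofReal_eq_zero.2 h,
        one_div_pos.2 hpos⟩))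
    have hbxy : 1 + (1 - t) * x < 1 + (1 - t) * y := by nlinarith
    rw [ENNReal.ofReal_rpow_of_pos hbx, ENNReal.ofReal_rpow_of_pos (hbx.trans hbxy),
      ENNReal.ofReal_lt_ofReal_iff (Real.rpow_pos_of_pos (hbx.trans hbxy) _)]
    exact Real.rpow_lt_rpow hbx.le hbxy (one_div_pos.2 hpos)

theorem qexpE_mono (t : ℝ) : Monotone (qexpE t) := by
  intro x y hxy
  rcases hxy.eq_or_lt with rfl | hlt
  · exact le_rfl
  by_cases hx : qexpE t x = 0
  · simp [hx]
  by_cases hy : qexpE t y = ∞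
  · simp [hy]
  exact (qexpE_lt_qexpE_s4 hlt hx hy).le

theorem qexpE_sub_add_qexpE_neg_lt {t w a b : ℝ} (hab : a < b)
    (ha : qexpE t (w - a) + qexpE t (-a) ≠ ∞) (hb : qexpE t (w - b) + qexpE t (-b) ≠ 0) :
    qexpE t (w - b) + qexpE t (-b) < qexpE t (w - a) + qexpE t (-a) := by
  obtain ⟨ha₁, ha₂⟩ := ENNReal.add_ne_top.1 ha
  have h₁ : qexpE t (w - b) ≤ qexpE t (w - a) := qexpE_mono t (by linarith)
  have h₂ : qexpE t (-b) ≤ qexpE t (-a) := qexpE_mono t (by linarith)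
  by_cases hb₁ : qexpE t (w - b) = 0
  · have hb₂ : qexpE t (-b) ≠ 0 := fun h ↦ hb (by rw [hb₁, h, add_zero])
    exact ENNReal.add_lt_add_of_le_of_lt (ne_top_of_le_ne_top ha₁ h₁) h₁
      (qexpE_lt_qexpE_s4 (by linarith) hb₂ ha₂)
  · exact ENNReal.add_lt_add_of_lt_of_le (ne_top_of_le_ne_top ha₂ h₂)
      (qexpE_lt_qexpE_s4 (by linarith) hb₁ ha₁) h₂

theorem eq_of_qexpE_sub_add_qexpE_neg_eq_one {t w a b : ℝ}
    (ha : qexpE t (w - a) + qexpE t (-a) = 1) (hb : qexpE t (w - b) + qexpE t (-b) = 1) :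
    a = b := by
  by_contra hne
  rcases lt_or_gt_of_ne hne with hab | hba
  · exact (qexpE_sub_add_qexpE_neg_lt hab (ha ▸ one_ne_top) (hb ▸ one_ne_zero)).ne
      (hb.trans ha.symm)
  · exact (qexpE_sub_add_qexpE_neg_lt hba (hb ▸ one_ne_top) (ha ▸ one_ne_zero)).ne
      (ha.trans hb.symm)

/-- for every `t ∈ ℝ`, the `t`-logistic distribution function
`G_t(z) = exp_t(z - γ_t(z))` (where `γ_t(z)` is the unique real with
`exp_t(z - γ_t(z)) + exp_t(-γ_t(z)) = 1`) satisfies the symmetry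
`G_t(-z) = 1 - G_t(z)` for all `z`; equivalently `γ_t(-z) = -z + γ_t(z)`. -/
theorem t_logistic_symmetry (t : ℝ) (γ : ℝ → ℝ)
    (hγ : ∀ z : ℝ, qexpE t (z - γ z) + qexpE t (-(γ z)) = 1) :
    ∀ z : ℝ,
      qexpE t (-z - γ (-z)) = 1 - qexpE t (z - γ z) ∧ γ (-z) = -z + γ z := by
  intro z
  have hswap : qexpE t (-z - (-z + γ z)) + qexpE t (-(-z + γ z)) = 1 := by
    rw [show -z - (-z + γ z) = -γ z by ring, show -(-z + γ z) = z - γ z by ring, add_comm]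
    exact hγ z
  have hγneg : γ (-z) = -z + γ z := eq_of_qexpE_sub_add_qexpE_neg_eq_one (hγ (-z)) hswap
  refine ⟨?_, hγneg⟩
  rw [hγneg, show -z - (-z + γ z) = -γ z by ring]
  have hG_ne_top : qexpE t (z - γ z) ≠ ∞ :=
    ne_top_of_le_ne_top one_ne_top (le_self_add.trans_eq (hγ z))
  exact ENNReal.eq_sub_of_add_eq hG_ne_top ((add_comm _ _).trans (hγ z))
end

section
/- Let t > 1. Then the t-logistic distribution function satisfies G_t(z) = [(1−t)z]^{1/(1−t)} + o((−z)^{1/(1−t)}) as z → −∞; equivalently, lim_{z→−∞} G_t(z) / ((1−t)z)^{1/(1−t)} = 1. Moreover, γ_t(z) → 0 as z → −∞. -/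
/-!
For `t > 1` the `t`-exponential is increasing, equals `1` at `0` and decays like
`((1 - t) z) ^ (1 / (1 - t))` at `-∞`. Since the two terms of `exp_t(z - γ) + exp_t(-γ) = 1`
are at most `1`, both arguments are nonpositive, so `γ ≥ 0` and `G_t(z) ≤ exp_t(z) → 0`.
Hence `exp_t(-γ) → 1`, and inverting `exp_t` gives `γ → 0`. Finally
`G_t(z) / ((1 - t) z) ^ (1 / (1 - t)) = (1 + (1 + (t - 1) γ) / ((1 - t) z)) ^ (1 / (1 - t)) → 1`.
-/

open ENNReal Filter Topology

section TExp

variable {t x y : ℝ}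

lemma one_le_one_add_mul_of_nonpos (ht : 1 < t) (hx : x ≤ 0) : 1 ≤ 1 + (1 - t) * x := by
  nlinarith

lemma qexpE_toReal_of_nonpos (ht : 1 < t) (hx : x ≤ 0) :
    (qexpE t x).toReal = (1 + (1 - t) * x) ^ (1 / (1 - t)) := by
  have hbase := one_le_one_add_mul_of_nonpos ht hx
  rw [qexpE, if_neg ht.ne', ENNReal.ofReal_rpow_of_pos (by linarith),
    ENNReal.toReal_ofReal (Real.rpow_nonneg (by linarith) _)]

lemma qexpE_toReal_rpow_one_sub (ht : 1 < t) (hx : x ≤ 0) :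
    (qexpE t x).toReal ^ (1 - t) = 1 + (1 - t) * x := by
  have hbase := one_le_one_add_mul_of_nonpos ht hx
  rw [qexpE_toReal_of_nonpos ht hx, ← Real.rpow_mul (by linarith),
    one_div_mul_cancel (sub_ne_zero.mpr ht.ne), Real.rpow_one]

lemma one_lt_qexpE (ht : 1 < t) (hx : 0 < x) : 1 < qexpE t x := by
  have hp : 1 / (1 - t) < 0 := one_div_neg.mpr (by linarith)
  rw [qexpE, if_neg ht.ne']
  rcases le_or_gt (1 + (1 - t) * x) 0 with hbase | hbase
  · rw [ENNReal.ofReal_eq_zero.mpr hbase, ENNReal.zero_rpow_of_neg hp]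
    exact ENNReal.one_lt_top
  · rw [ENNReal.ofReal_rpow_of_pos hbase, ENNReal.one_lt_ofReal]
    exact Real.one_lt_rpow_of_pos_of_lt_one_of_neg hbase (by nlinarith) hp

lemma nonpos_of_qexpE_le_one (ht : 1 < t) (h : qexpE t x ≤ 1) : x ≤ 0 :=
  not_lt.mp fun hx => (one_lt_qexpE ht hx).not_ge h

lemma qexpE_toReal_le_of_le (ht : 1 < t) (hxy : x ≤ y) (hy : y ≤ 0) :
    (qexpE t x).toReal ≤ (qexpE t y).toReal := by
  rw [qexpE_toReal_of_nonpos ht (hxy.trans hy), qexpE_toReal_of_nonpos ht hy]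
  exact Real.rpow_le_rpow_of_nonpos (by linarith [one_le_one_add_mul_of_nonpos ht hy])
    (by nlinarith) (one_div_neg.mpr (by linarith)).le

lemma tendsto_one_add_mul_atBot_atTop (ht : 1 < t) :
    Tendsto (fun x : ℝ => 1 + (1 - t) * x) atBot atTop :=
  tendsto_atTop_add_const_left _ 1 ((tendsto_const_mul_atTop_of_neg (by linarith)).2 tendsto_id)

lemma tendsto_qexpE_toReal_atBot (ht : 1 < t) :
    Tendsto (fun x => (qexpE t x).toReal) atBot (𝓝 0) := by
  have hp : 1 / (1 - t) = -(1 / (t - 1)) := by rw [← one_div_neg_eq_neg_one_div, neg_sub]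
  have hdecay := (tendsto_rpow_neg_atTop (one_div_pos.mpr (sub_pos.mpr ht))).comp
    (tendsto_one_add_mul_atBot_atTop ht)
  refine hdecay.congr' ?_
  filter_upwards [eventually_le_atBot 0] with x hx
  rw [Function.comp_apply, qexpE_toReal_of_nonpos ht hx, hp]

end TExp

lemma tendsto_one_add_mul_sub_rpow_div_rpow {a : ℝ} (ha : a < 0) (p : ℝ) {g : ℝ → ℝ}
    (hg : Tendsto g atBot (𝓝 0)) :
    Tendsto (fun z => (1 + a * (z - g z)) ^ p / (a * z) ^ p) atBot (𝓝 1) := by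
  have hden : Tendsto (fun z => a * z) atBot atTop :=
    (tendsto_const_mul_atTop_of_neg ha).2 tendsto_id
  have hnum : Tendsto (fun z => 1 - a * g z) atBot (𝓝 1) := by
    simpa using (hg.const_mul a).const_sub 1
  have hratio : Tendsto (fun z => 1 + (1 - a * g z) / (a * z)) atBot (𝓝 1) := by
    simpa using (hnum.div_atTop hden).const_add 1
  have hlim : Tendsto (fun z => (1 + (1 - a * g z) / (a * z)) ^ p) atBot (𝓝 1) := by
    simpa using hratio.rpow_const (p := p) (Or.inl one_ne_zero)
  refine hlim.congr' ?_
  filter_upwards [hden.eventually_gt_atTop 0, (hden.atTop_add hnum).eventually_gt_atTop 0]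
    with z hz hpos
  rw [← Real.div_rpow _ hz.le]
  · congr 1
    field_simp [(mul_ne_zero_iff.mp hz.ne').1, (mul_ne_zero_iff.mp hz.ne').2]
    ring
  · linarith

/-- let `t > 1`.  The `t`-logistic distribution function
`G_t(z) = exp_t(z - γ_t(z))` satisfies
`G_t(z) = [(1-t)z]^{1/(1-t)} + o((-z)^{1/(1-t)})` as `z → -∞`; equivalently
`lim_{z→-∞} G_t(z) / ((1-t)z)^{1/(1-t)} = 1`.  Moreover `γ_t(z) → 0` as `z → -∞`. -/
theorem t_logistic_tail_t_gt_one (t : ℝ) (ht : 1 < t) (γ : ℝ → ℝ)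
    (hγ : ∀ z : ℝ, qexpE t (z - γ z) + qexpE t (-(γ z)) = 1) :
    Tendsto (fun z : ℝ => (qexpE t (z - γ z)).toReal / ((1 - t) * z) ^ (1 / (1 - t)))
        atBot (𝓝 1) ∧
      Tendsto γ atBot (𝓝 0) := by
  have hγ_nonneg (z : ℝ) : 0 ≤ γ z :=
    neg_nonpos.mp (nonpos_of_qexpE_le_one ht (le_add_self.trans_eq (hγ z)))
  have hsum (z : ℝ) : (qexpE t (z - γ z)).toReal + (qexpE t (-(γ z))).toReal = 1 := by
    have hle := hγ z ▸ ENNReal.one_ne_top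
    rw [← ENNReal.toReal_add (ENNReal.add_ne_top.mp hle).1 (ENNReal.add_ne_top.mp hle).2, hγ z,
      ENNReal.toReal_one]
  have hG : Tendsto (fun z => (qexpE t (z - γ z)).toReal) atBot (𝓝 0) := by
    refine squeeze_zero' (Eventually.of_forall fun _ => ENNReal.toReal_nonneg) ?_
      (tendsto_qexpE_toReal_atBot ht)
    filter_upwards [eventually_le_atBot 0] with z hz
    exact qexpE_toReal_le_of_le ht (by linarith [hγ_nonneg z]) hz
  have hB : Tendsto (fun z => (qexpE t (-(γ z))).toReal) atBot (𝓝 1) := by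
    simpa using (hG.const_sub 1).congr fun z => by linarith [hsum z]
  have hγ0 : Tendsto γ atBot (𝓝 0) := by
    -- inverting `exp_t`: `γ = (1 - exp_t(-γ) ^ (1 - t)) / (1 - t)`
    have hinv := ((hB.rpow_const (p := 1 - t) (Or.inl one_ne_zero)).const_sub 1).div_const (1 - t)
    simp only [Real.one_rpow, sub_self, zero_div,
      qexpE_toReal_rpow_one_sub ht (neg_nonpos.mpr (hγ_nonneg _))] at hinv
    refine hinv.congr fun z => ?_
    field_simp [sub_ne_zero.mpr ht.ne]
    ring
  refine ⟨(tendsto_one_add_mul_sub_rpow_div_rpow (sub_neg.mpr ht) (1 / (1 - t)) hγ0).congr' ?_,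
    hγ0⟩
  filter_upwards [eventually_le_atBot 0] with z hz
  rw [qexpE_toReal_of_nonpos (x := z - γ z) ht (by linarith [hγ_nonneg z])]
end

section
/- Let t < 0 and set z_* = −1/(1−t). Then the t-logistic distribution function satisfies G_t(z) = (z−z_*) + o(z−z_*) as z → z_* from above; equivalently, lim_{z→z_*+} G_t(z)/(z−z_*) = 1. -/
/-!
With `a = 1 - t`, raising `exp_t` to the power `a` linearises it: `exp_t(x) ^ a = [1 + a x]_+`.
On `-1/a < z < 1/a` both terms of the defining equation of `γ_t` are positive, so
`g = G_t(z)` satisfies `g ^ a - (1 - g) ^ a + 1 = a (z - z_*)`. For `a > 1` the left-hand side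
vanishes at `0` with derivative `a`, hence `g → 0` and `g / (z - z_*) → a / a = 1`.
-/

open ENNReal Filter Topology

open Set

lemma hasDerivAt_rpow_sub_one_sub_rpow {a : ℝ} (ha : 1 < a) :
    HasDerivAt (fun x : ℝ => x ^ a - (1 - x) ^ a) a 0 := by
  have hleft : HasDerivAt (fun x : ℝ => x ^ a) 0 0 := by
    simpa [Real.zero_rpow (sub_ne_zero.mpr ha.ne')] using
      Real.hasDerivAt_rpow_const (x := 0) (p := a) (Or.inr ha.le)
  have hright : HasDerivAt (fun x : ℝ => (1 - x) ^ a) (-a) 0 := by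
    simpa using ((hasDerivAt_id (0 : ℝ)).const_sub 1).rpow_const (p := a) (Or.inr ha.le)
  exact (hleft.sub hright).congr_deriv (by ring)

lemma tendsto_rpow_sub_one_sub_rpow_add_one_div {a : ℝ} (ha : 1 < a) :
    Tendsto (fun x : ℝ => (x ^ a - (1 - x) ^ a + 1) / x) (𝓝[≠] 0) (𝓝 a) := by
  refine (hasDerivAt_iff_tendsto_slope.mp (hasDerivAt_rpow_sub_one_sub_rpow ha)).congr fun x => ?_
  rw [slope_def_field, Real.zero_rpow (by linarith), sub_zero, Real.one_rpow]
  ring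

lemma tendsto_div_sub_of_rpow_sub_rpow_eq {a : ℝ} (ha : 1 < a) {g : ℝ → ℝ}
    (hg : ∀ᶠ z in 𝓝[>] (-1 / a), g z ∈ Ioc 0 1 ∧ g z ^ a - (1 - g z) ^ a = a * z) :
    Tendsto (fun z => g z / (z - (-1 / a))) (𝓝[>] (-1 / a)) (𝓝 1) := by
  have ha0 : a ≠ 0 := by positivity
  have hshift : ∀ z, a * (z - (-1 / a)) = a * z + 1 := fun z => by field_simp; ring
  have hbound : ∀ᶠ z in 𝓝[>] (-1 / a), g z ≤ a * (z - (-1 / a)) := by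
    filter_upwards [hg] with z hgz
    obtain ⟨⟨hg0, hg1⟩, heq⟩ := hgz
    have : (1 - g z) ^ a ≤ 1 - g z := Real.rpow_le_self_of_le_one (by linarith) (by linarith) ha.le
    have : 0 ≤ g z ^ a := Real.rpow_nonneg hg0.le a
    linarith [hshift z]
  have hlin : Tendsto (fun z => a * (z - (-1 / a))) (𝓝[>] (-1 / a)) (𝓝 0) := by
    have : Tendsto (fun z => a * (z - (-1 / a))) (𝓝 (-1 / a)) (𝓝 (a * (-1 / a - (-1 / a)))) :=
      (continuous_const.mul (continuous_id.sub continuous_const)).tendsto _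
    simpa using this.mono_left nhdsWithin_le_nhds
  have hg_zero : Tendsto g (𝓝[>] (-1 / a)) (𝓝[≠] 0) := by
    refine tendsto_nhdsWithin_iff.mpr ⟨squeeze_zero' ?_ hbound hlin, ?_⟩
    · filter_upwards [hg] with z hz using hz.1.1.le
    · filter_upwards [hg] with z hz using hz.1.1.ne'
  have hratio := ((tendsto_rpow_sub_one_sub_rpow_add_one_div ha).comp hg_zero).inv₀ ha0
  have hlim := hratio.const_mul a
  rw [mul_inv_cancel₀ ha0] at hlim
  refine hlim.congr' ?_
  filter_upwards [hg, self_mem_nhdsWithin] with z hgz (hz : -1 / a < z)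
  obtain ⟨⟨hg0, -⟩, heq⟩ := hgz
  have hψ : g z ^ a - (1 - g z) ^ a + 1 = a * (z - (-1 / a)) := by rw [heq, hshift]
  have hz' : z - (-1 / a) ≠ 0 := sub_ne_zero.mpr hz.ne'
  simp only [Function.comp_def, hψ]
  field_simp

lemma toReal_qexpE_rpow {t : ℝ} (ht : t < 1) (z : ℝ) :
    (qexpE t z).toReal ^ (1 - t) = max (1 + (1 - t) * z) 0 := by
  have ht0 : 1 - t ≠ 0 := by linarith
  rw [qexpE, if_neg (by linarith), ENNReal.toReal_rpow, ← ENNReal.rpow_mul,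
    one_div_mul_cancel ht0, ENNReal.rpow_one, ENNReal.toReal_ofReal']

lemma qexpE_toReal_mem_Ioc_and_rpow_sub_rpow {t γ z : ℝ} (ht : t < 1)
    (hγ : qexpE t (z - γ) + qexpE t (-γ) = 1) (hlo : -1 / (1 - t) < z) (hhi : z < 1 / (1 - t)) :
    (qexpE t (z - γ)).toReal ∈ Ioc 0 1 ∧
      (qexpE t (z - γ)).toReal ^ (1 - t) - (1 - (qexpE t (z - γ)).toReal) ^ (1 - t) =
        (1 - t) * z := by
  set a := 1 - t
  have ha : 0 < a := by linarith
  have hlo' : -1 < a * z := by rwa [div_lt_iff₀' ha] at hlo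
  have hhi' : a * z < 1 := by rwa [lt_div_iff₀' ha] at hhi
  have hsum := congrArg ENNReal.toReal hγ
  rw [ENNReal.toReal_add (ne_top_of_le_ne_top one_ne_top (hγ ▸ le_self_add))
    (ne_top_of_le_ne_top one_ne_top (hγ ▸ le_add_self)), ENNReal.toReal_one] at hsum
  set g := (qexpE t (z - γ)).toReal
  have hgv : g ^ a = max (1 + a * (z - γ)) 0 := toReal_qexpE_rpow ht _
  have hgu : (1 - g) ^ a = max (1 + a * -γ) 0 := by
    rw [show 1 - g = (qexpE t (-γ)).toReal by linarith]
    exact toReal_qexpE_rpow ht _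
  have hg1 : g ≤ 1 := by linarith [ENNReal.toReal_nonneg (a := qexpE t (-γ))]
  have hg0 : 0 ≤ g := ENNReal.toReal_nonneg
  -- If one term of the defining equation vanishes, the other is `1`, forcing `γ = 0` resp.
  -- `γ = z`; both contradict `|a z| < 1`.
  have hv : 0 < 1 + a * (z - γ) := by
    by_contra! h
    have : g = 0 := (Real.rpow_eq_zero hg0 ha.ne').mp (by rw [hgv, max_eq_right h])
    rw [this, sub_zero, Real.one_rpow] at hgu
    rcases max_choice (1 + a * -γ) 0 with h' | h' <;> nlinarith
  have hu : 0 < 1 + a * -γ := by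
    by_contra! h
    have : 1 - g = 0 := (Real.rpow_eq_zero (by linarith) ha.ne').mp (by rw [hgu, max_eq_right h])
    rw [show g = 1 by linarith, Real.one_rpow] at hgv
    rcases max_choice (1 + a * (z - γ)) 0 with h' | h' <;> nlinarith
  rw [max_eq_left hv.le] at hgv
  rw [max_eq_left hu.le] at hgu
  refine ⟨⟨hg0.lt_of_ne ?_, hg1⟩, by rw [hgv, hgu]; ring⟩
  intro hg
  rw [← hg, Real.zero_rpow ha.ne'] at hgv
  linarith

/-- let `t < 0` and `z_* = -1/(1-t)`.  The `t`-logistic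
distribution function `G_t(z) = exp_t(z - γ_t(z))` satisfies
`G_t(z) = (z - z_*) + o(z - z_*)` as `z → z_*` from above; equivalently
`lim_{z→z_*+} G_t(z)/(z - z_*) = 1`. -/
theorem t_logistic_boundary_t_neg (t : ℝ) (ht : t < 0) (γ : ℝ → ℝ)
    (hγ : ∀ z : ℝ, qexpE t (z - γ z) + qexpE t (-(γ z)) = 1) :
    Tendsto (fun z : ℝ => (qexpE t (z - γ z)).toReal / (z - (-1 / (1 - t))))
      (𝓝[>] (-1 / (1 - t))) (𝓝 1) := by
  have ha : 0 < 1 - t := by linarith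
  refine tendsto_div_sub_of_rpow_sub_rpow_eq (by linarith) ?_
  have hint : -1 / (1 - t) < 1 / (1 - t) := div_lt_div_of_pos_right (by norm_num) ha
  filter_upwards [Ioo_mem_nhdsGT hint] with z hz
  exact qexpE_toReal_mem_Ioc_and_rpow_sub_rpow (by linarith) (hγ z) hz.1 hz.2
end

section
/- Let t < 0 and set z_* = −1/(1−t). Then γ_t(z) = (z−z_*) − (z−z_*)^{1−t}/(1−t) + o((z−z_*)^{1−t}) as z → z_* from above; equivalently, lim_{z→z_*+} [γ_t(z) − (z−z_*) + (z−z_*)^{1−t}/(1−t)] / (z−z_*)^{1−t} = 0. -/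
/-!
Write `s = 1 - t > 1`, `ε = z - z_*` and `G(x) = 1 - (1 - s x)^{1/s} = 1 - exp_t(-x)`. For
`z ∈ (z_*, 0)` the normalization forces `0 < γ < ε`, and then both `t`-exponentials are positive and
`exp_t(z - γ) = (s (ε - γ))^{1/s} = G(γ)`, i.e. `ε - γ = G(γ)^s / s`. As `G'(0) = 1` we have
`G(γ) ~ γ`, hence `ε / γ = 1 + γ^{s-1} (G(γ)/γ)^s / s → 1` and `G(γ) / ε → 1`. The quotient in
question equals `(1 - (G(γ)/ε)^s) / s`, so it tends to `0`.
-/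

open ENNReal Filter Topology

lemma qexpE_of_lt_one {t : ℝ} (ht : t < 1) (u : ℝ) :
    qexpE t u = ENNReal.ofReal (max (1 + (1 - t) * u) 0 ^ (1 - t)⁻¹) := by
  have hexp : 0 < (1 - t)⁻¹ := inv_pos.mpr (sub_pos.mpr ht)
  rw [qexpE, if_neg ht.ne, one_div, ← ENNReal.ofReal_rpow_of_nonneg (le_max_right _ _) hexp.le,
    ENNReal.ofReal_max, ENNReal.ofReal_zero, max_zero]

lemma qexpE_add_qexpE_eq_one_iff {t : ℝ} (ht : t < 1) (u v : ℝ) :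
    qexpE t u + qexpE t v = 1 ↔
      max (1 + (1 - t) * u) 0 ^ (1 - t)⁻¹ + max (1 + (1 - t) * v) 0 ^ (1 - t)⁻¹ = 1 := by
  rw [qexpE_of_lt_one ht, qexpE_of_lt_one ht, ← ENNReal.ofReal_add (by positivity) (by positivity),
    ENNReal.ofReal_eq_one]

lemma normalizer_bounds_and_gap_eq {s z g : ℝ} (hs : 0 < s) (hz : z ∈ Set.Ioo (-1 / s) 0)
    (h : max (1 + s * (z - g)) 0 ^ s⁻¹ + max (1 + s * -g) 0 ^ s⁻¹ = 1) :
    0 < g ∧ g < z - -1 / s ∧ z - -1 / s - g = (1 - (1 - s * g) ^ s⁻¹) ^ s / s := by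
  obtain ⟨hz_lo, hz_hi⟩ := hz
  have hsz : 0 < 1 + s * z := by
    rw [div_lt_iff₀ hs] at hz_lo
    linarith
  have hgap : z - -1 / s - g = (1 + s * (z - g)) / s := by
    field_simp
    ring
  rw [show 1 + s * -g = 1 - s * g by ring] at h
  have hg : 0 < g := by
    by_contra! hg
    have h1 : 1 ≤ max (1 - s * g) 0 ^ s⁻¹ :=
      Real.one_le_rpow (le_max_of_le_left (by nlinarith)) (by positivity)
    have h2 : 0 < max (1 + s * (z - g)) 0 ^ s⁻¹ :=
      Real.rpow_pos_of_pos (lt_max_of_lt_left (by nlinarith)) _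
    linarith
  have hb : max (1 - s * g) 0 ^ s⁻¹ < 1 :=
    Real.rpow_lt_one (le_max_right _ _) (max_lt (by nlinarith) one_pos) (by positivity)
  have ha : 0 < 1 + s * (z - g) := by
    by_contra! ha
    rw [max_eq_right ha, Real.zero_rpow (inv_ne_zero hs.ne')] at h
    linarith
  have hsg : 0 < 1 - s * g := by nlinarith
  rw [max_eq_left hsg.le] at h hb
  rw [max_eq_left ha.le, ← eq_sub_iff_add_eq, Real.rpow_inv_eq ha.le (by linarith) hs.ne'] at h
  refine ⟨hg, ?_, by rw [hgap, h]⟩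
  rw [← sub_pos, hgap]
  positivity

lemma tendsto_one_sub_one_sub_mul_rpow_inv_div {s : ℝ} (hs : s ≠ 0) :
    Tendsto (fun x => (1 - (1 - s * x) ^ s⁻¹) / x) (𝓝[>] 0) (𝓝 1) := by
  have hderiv : HasDerivAt (fun x => 1 - (1 - s * x) ^ s⁻¹) 1 0 := by
    have h := (((hasDerivAt_id (0 : ℝ)).const_mul s).const_sub 1).rpow_const (p := s⁻¹)
      (Or.inl (by simp))
    exact (h.const_sub 1).congr_deriv (by simp [hs])
  refine (hasDerivAt_iff_tendsto_slope_left_right.mp hderiv).2.congr fun x => ?_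
  simp [slope_def_field]

lemma tendsto_sub_add_rpow_div_div_rpow {α : Type*} {l : Filter α} {s : ℝ} {ε g G : α → ℝ}
    (hs : 1 < s) (hg : Tendsto g l (𝓝[>] 0)) (hG : Tendsto (fun a => G a / g a) l (𝓝 1))
    (hgap : ∀ᶠ a in l, ε a - g a = G a ^ s / s) :
    Tendsto (fun a => (g a - ε a + ε a ^ s / s) / ε a ^ s) l (𝓝 0) := by
  have hg_pos : ∀ᶠ a in l, 0 < g a := hg.eventually self_mem_nhdsWithin
  have hG_pos : ∀ᶠ a in l, 0 < G a := by
    filter_upwards [hg_pos, hG.eventually (lt_mem_nhds one_pos)] with a hga hGa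
    exact (div_pos_iff_of_pos_right hga).mp hGa
  have hε_pos : ∀ᶠ a in l, 0 < ε a := by
    filter_upwards [hg_pos, hG_pos, hgap] with a hga hGa hgapa
    have : 0 < G a ^ s / s := by positivity
    linarith
  have hεg : Tendsto (fun a => ε a / g a) l (𝓝 1) := by
    have hpow : Tendsto (fun a => g a ^ (s - 1)) l (𝓝 0) := by
      simpa [Real.zero_rpow (sub_pos.mpr hs).ne'] using
        (hg.mono_right nhdsWithin_le_nhds).rpow_const (Or.inr (sub_pos.mpr hs).le)
    have hGs : Tendsto (fun a => (G a / g a) ^ s) l (𝓝 1) := by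
      simpa using hG.rpow_const (p := s) (Or.inl one_ne_zero)
    have hlim : Tendsto (fun a => 1 + g a ^ (s - 1) * (G a / g a) ^ s / s) l (𝓝 1) := by
      simpa using (hpow.mul hGs).div_const s |>.const_add 1
    refine hlim.congr' ?_
    filter_upwards [hg_pos, hG_pos, hgap] with a hga hGa hgapa
    rw [Real.div_rpow hGa.le hga.le, Real.rpow_sub_one hga.ne',
      show ε a = g a + G a ^ s / s by linarith]
    field_simp
  have hGε : Tendsto (fun a => (G a / ε a) ^ s) l (𝓝 1) := by
    have hlim : Tendsto (fun a => (G a / g a / (ε a / g a)) ^ s) l (𝓝 1) := by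
      simpa using (hG.div hεg one_ne_zero).rpow_const (p := s) (Or.inl (by simp))
    refine hlim.congr' ?_
    filter_upwards [hg_pos] with a hga
    rw [div_div_div_cancel_right₀ hga.ne']
  have hlim : Tendsto (fun a => (1 - (G a / ε a) ^ s) / s) l (𝓝 0) := by
    simpa using (hGε.const_sub 1).div_const s
  refine hlim.congr' ?_
  filter_upwards [hG_pos, hε_pos, hgap] with a hGa hεa hgapa
  rw [Real.div_rpow hGa.le hεa.le]
  rw [show g a - ε a = -(G a ^ s / s) by linarith]
  have : 0 < ε a ^ s := by positivity
  field_simp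
  ring

/-- let `t < 0` and `z_* = -1/(1-t)`.  Then
`γ_t(z) = (z-z_*) - (z-z_*)^{1-t}/(1-t) + o((z-z_*)^{1-t})` as `z → z_*+`;
equivalently
`lim_{z→z_*+} [γ_t(z) - (z-z_*) + (z-z_*)^{1-t}/(1-t)] / (z-z_*)^{1-t} = 0`. -/
theorem t_logistic_gamma_expansion_t_neg (t : ℝ) (ht : t < 0) (γ : ℝ → ℝ)
    (hγ : ∀ z : ℝ, qexpE t (z - γ z) + qexpE t (-(γ z)) = 1) :
    Tendsto
      (fun z : ℝ =>
        (γ z - (z - (-1 / (1 - t))) + (z - (-1 / (1 - t))) ^ (1 - t) / (1 - t)) /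
          (z - (-1 / (1 - t))) ^ (1 - t))
      (𝓝[>] (-1 / (1 - t))) (𝓝 0) := by
  have hs : 1 < 1 - t := by linarith
  have hsol : ∀ᶠ z in 𝓝[>] (-1 / (1 - t)), 0 < γ z ∧ γ z < z - -1 / (1 - t) ∧
      z - -1 / (1 - t) - γ z = (1 - (1 - (1 - t) * γ z) ^ (1 - t)⁻¹) ^ (1 - t) / (1 - t) := by
    filter_upwards [Ioo_mem_nhdsGT (div_neg_of_neg_of_pos neg_one_lt_zero (by linarith))]
      with z hz
    exact normalizer_bounds_and_gap_eq (by linarith) hz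
      ((qexpE_add_qexpE_eq_one_iff (by linarith) _ _).mp (hγ z))
  have hγ_lim : Tendsto γ (𝓝[>] (-1 / (1 - t))) (𝓝[>] 0) := by
    have hgap_lim : Tendsto (fun z => z - -1 / (1 - t)) (𝓝[>] (-1 / (1 - t))) (𝓝 0) :=
      tendsto_sub_nhds_zero_iff.mpr nhdsWithin_le_nhds
    refine tendsto_nhdsWithin_of_tendsto_nhds_of_eventually_within _ ?_ (hsol.mono fun z h => h.1)
    exact squeeze_zero' (hsol.mono fun z h => h.1.le) (hsol.mono fun z h => h.2.1.le) hgap_lim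
  exact tendsto_sub_add_rpow_div_div_rpow hs hγ_lim
    ((tendsto_one_sub_one_sub_mul_rpow_inv_div (by linarith)).comp hγ_lim)
    (hsol.mono fun z h => h.2.2)
end

section
/- Let q ∈ ℝ and κ > 0. Let ξ_1, …, ξ_J ∈ ℝ^p be distinct points not contained in any affine hyperplane of ℝ^p, and let p_1, …, p_J > 0 with Σ_j p_j = 1. Let x_1, …, x_n ∈ {ξ_1, …, ξ_J} (n ≥ 0). Define Θ = {(α,β) ∈ ℝ × ℝ^p : 1 + (1−q)(α + βᵀξ_j) > 0 for all j = 1,…,J} and, on Θ, the penalized log-likelihood L(α,β) = −Σ_{j=1}^J p_j exp_q(α + βᵀξ_j) + Σ_{i=1}^n log exp_q(α + βᵀx_i) + κ Σ_{j=1}^J p_j log exp_q(α + βᵀξ_j). Then L attains its maximum on Θ, i.e., the additive-smoothing estimator exists. -/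
open Filter Topology

/-- The penalized log-likelihood
`L(α,β) = -Σ_j p_j exp_q(α+βᵀξ_j) + Σ_i log exp_q(α+βᵀx_i)
          + κ Σ_j p_j log exp_q(α+βᵀξ_j)`. -/
noncomputable def penLogLik (q κ : ℝ) {J p n : ℕ}
    (w : Fin J → ℝ) (ξ : Fin J → Fin p → ℝ) (x : Fin n → Fin p → ℝ)
    (ab : ℝ × (Fin p → ℝ)) : ℝ :=
  -(∑ j, w j * qexp q (ab.1 + ∑ i, ab.2 i * ξ j i))
    + (∑ i, Real.log (qexp q (ab.1 + ∑ k, ab.2 k * x i k)))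
    + κ * ∑ j, w j * Real.log (qexp q (ab.1 + ∑ i, ab.2 i * ξ j i))

/-! In the coordinates `u_j = log exp_q(α + βᵀξ_j)` the likelihood becomes
`∑ⱼ ((κ p_j + n_j) u_j - p_j e^{u_j})`, where `n_j` counts the observations equal to `ξ_j`.
Each summand tends to `-∞` as `|u_j| → ∞` and is bounded above, so this function of `u ∈ ℝ^J`
is continuous and coercive, and it attains its maximum on every nonempty closed set. The image
of `Θ` is closed: it is the preimage, under the continuous map `u ↦ (ln_q e^{u_j})_j`, of the
range of the linear map `(α, β) ↦ (α + βᵀξ_j)_j`, a finite-dimensional hence closed subspace. -/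

open Set Real

section QExponential

variable {q t x : ℝ}

noncomputable def qlog (q x : ℝ) : ℝ :=
  if q = 1 then Real.log x else (x ^ (1 - q) - 1) / (1 - q)

lemma qexp_pos (h : 0 < 1 + (1 - q) * t) : 0 < qexp q t := by
  unfold qexp
  split_ifs
  · exact exp_pos t
  · rw [max_eq_left h.le]
    exact rpow_pos_of_pos h _

lemma one_add_mul_qlog (hq : q ≠ 1) : 1 + (1 - q) * qlog q x = x ^ (1 - q) := by
  have : 1 - q ≠ 0 := sub_ne_zero.mpr hq.symm
  simp only [qlog, hq, if_false]
  field_simp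
  ring

lemma one_add_mul_qlog_pos (hx : 0 < x) : 0 < 1 + (1 - q) * qlog q x := by
  by_cases hq : q = 1
  · simp [hq]
  · rw [one_add_mul_qlog hq]
    exact rpow_pos_of_pos hx _

lemma qlog_qexp (h : 0 < 1 + (1 - q) * t) : qlog q (qexp q t) = t := by
  by_cases hq : q = 1
  · simp [qlog, qexp, hq]
  · have hq' : 1 - q ≠ 0 := sub_ne_zero.mpr (Ne.symm hq)
    simp only [qlog, qexp, hq, if_false, max_eq_left h.le, one_div, rpow_inv_rpow h.le hq']
    field_simp
    ring

lemma qexp_qlog (hx : 0 < x) : qexp q (qlog q x) = x := by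
  by_cases hq : q = 1
  · simp [qlog, qexp, hq, exp_log hx]
  · have hq' : 1 - q ≠ 0 := sub_ne_zero.mpr (Ne.symm hq)
    rw [qexp, if_neg hq, one_add_mul_qlog hq, max_eq_left (rpow_nonneg hx.le _), one_div,
      rpow_rpow_inv hx.le hq']

lemma continuousOn_qlog : ContinuousOn (qlog q) (Ioi 0) := by
  unfold qlog
  split_ifs
  · exact continuousOn_log.mono fun x hx => ne_of_gt hx
  · exact ((continuousOn_id.rpow_const fun x hx => Or.inl (ne_of_gt hx)).sub
      continuousOn_const).div_const _

end QExponential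

section Coercivity

lemma tendsto_sum_apply_cocompact_atBot {ι : Type*} [Fintype ι] {X : ι → Type*}
    [∀ j, TopologicalSpace (X j)] {f : ∀ j, X j → ℝ}
    (hf : ∀ j, Tendsto (f j) (cocompact (X j)) atBot) (hbdd : ∀ j, BddAbove (range (f j))) :
    Tendsto (fun u : ∀ j, X j => ∑ j, f j (u j)) (cocompact (∀ j, X j)) atBot := by
  classical
  choose M hM using hbdd
  rw [← coprodᵢ_cocompact, Filter.coprodᵢ, tendsto_iSup]
  intro j
  refine tendsto_atBot_mono (fun u => ?_)
    (tendsto_atBot_add_const_right _ (∑ k ∈ Finset.univ.erase j, M k)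
      ((hf j).comp tendsto_comap))
  rw [← Finset.add_sum_erase _ _ (Finset.mem_univ j)]
  exact add_le_add le_rfl (Finset.sum_le_sum fun k _ => hM k (mem_range_self _))

variable {a b : ℝ}

lemma mul_sub_mul_exp_le (ha : 0 < a) (t : ℝ) :
    b * t - a * exp t ≤ 2 * b ^ 2 / a - b * |t| := by
  rcases le_total t 0 with ht | ht
  · rw [abs_of_nonpos ht]
    have : 0 ≤ 2 * b ^ 2 / a := by positivity
    nlinarith [exp_pos t]
  · -- `exp t ≥ t ^ 2 / 2`, and `2 b t - a t ^ 2 / 2 ≤ 2 b ^ 2 / a`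
    rw [abs_of_nonneg ht]
    have hexp := quadratic_le_exp_of_nonneg ht
    have hsq : 0 ≤ a / 2 * (t - 2 * b / a) ^ 2 := by positivity
    have : a / 2 * (t - 2 * b / a) ^ 2 = a * (t ^ 2 / 2) - 2 * b * t + 2 * b ^ 2 / a := by
      field_simp
      ring
    nlinarith

lemma tendsto_mul_sub_mul_exp_cocompact (ha : 0 < a) (hb : 0 < b) :
    Tendsto (fun t => b * t - a * exp t) (cocompact ℝ) atBot :=
  tendsto_atBot_mono (mul_sub_mul_exp_le ha)
    (tendsto_atBot_add_const_left _ _ (tendsto_neg_atTop_atBot.comp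
      (tendsto_norm_cocompact_atTop.const_mul_atTop hb)))

lemma bddAbove_range_mul_sub_mul_exp (ha : 0 < a) (hb : 0 ≤ b) :
    BddAbove (range fun t => b * t - a * exp t) :=
  ⟨2 * b ^ 2 / a, forall_mem_range.mpr fun t =>
    (mul_sub_mul_exp_le ha t).trans (sub_le_self _ (by positivity))⟩

lemma Continuous.exists_isMaxOn_of_tendsto_cocompact {E α : Type*} [TopologicalSpace E]
    [LinearOrder α] [TopologicalSpace α] [ClosedIciTopology α] {F : E → α} (hF : Continuous F)
    (hlim : Tendsto F (cocompact E) atBot) {K : Set E} (hK : IsClosed K) (hne : K.Nonempty) :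
    ∃ u ∈ K, IsMaxOn F K u :=
  hF.continuousOn.exists_isMaxOn' hK hne.some_mem
    ((hlim.eventually (eventually_le_atBot _)).filter_mono inf_le_left)

end Coercivity

section Reparametrization

variable {ι ι' : Type*} [Fintype ι'] {q : ℝ} {ξ : ι → ι' → ℝ}

def linearPredictor (ξ : ι → ι' → ℝ) : ℝ × (ι' → ℝ) →ₗ[ℝ] ι → ℝ where
  toFun ab j := ab.1 + ∑ i, ab.2 i * ξ j i
  map_add' _ _ := by
    ext j
    simp only [Prod.fst_add, Prod.snd_add, Pi.add_apply, add_mul, Finset.sum_add_distrib]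
    ring
  map_smul' _ _ := by
    ext j
    simp [Finset.mul_sum, mul_add, mul_assoc]

def paramSet (q : ℝ) (ξ : ι → ι' → ℝ) : Set (ℝ × (ι' → ℝ)) :=
  {ab | ∀ j, 0 < 1 + (1 - q) * linearPredictor ξ ab j}

noncomputable def logMass (q : ℝ) (ξ : ι → ι' → ℝ) (ab : ℝ × (ι' → ℝ)) (j : ι) : ℝ :=
  Real.log (qexp q (linearPredictor ξ ab j))

lemma zero_mem_paramSet : (0 : ℝ × (ι' → ℝ)) ∈ paramSet q ξ := by
  simp [paramSet]

/-- `t ↦ log (qexp q t)` maps `{t | 0 < 1 + (1 - q) t}` bijectively onto `ℝ`, with inverse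
`u ↦ qlog q (exp u)`. -/
lemma image_logMass_paramSet :
    logMass q ξ '' paramSet q ξ =
      (fun u j => qlog q (exp (u j))) ⁻¹' LinearMap.range (linearPredictor ξ) := by
  ext u
  constructor
  · rintro ⟨ab, hab, rfl⟩
    refine ⟨ab, funext fun j => ?_⟩
    show _ = qlog q (exp (logMass q ξ ab j))
    rw [logMass, exp_log (qexp_pos (hab j)), qlog_qexp (hab j)]
  · rintro ⟨ab, hab⟩
    refine ⟨ab, fun j => ?_, funext fun j => ?_⟩
    · rw [hab]
      exact one_add_mul_qlog_pos (exp_pos _)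
    · rw [logMass, hab, qexp_qlog (exp_pos _), log_exp]

lemma isClosed_image_logMass_paramSet : IsClosed (logMass q ξ '' paramSet q ξ) := by
  rw [image_logMass_paramSet]
  refine (Submodule.closed_of_finiteDimensional _).preimage (continuous_pi fun j => ?_)
  exact continuousOn_qlog.comp_continuous (continuous_exp.comp (continuous_apply j))
    fun u => exp_pos (u j)

end Reparametrization

open Finset in
lemma penLogLik_eq_sum {q κ : ℝ} {J p n : ℕ} {w : Fin J → ℝ} {ξ : Fin J → Fin p → ℝ}
    {x : Fin n → Fin p → ℝ} {σ : Fin n → Fin J} (hσ : ∀ i, x i = ξ (σ i))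
    {ab : ℝ × (Fin p → ℝ)} (hab : ab ∈ paramSet q ξ) :
    penLogLik q κ w ξ x ab =
      ∑ j, ((κ * w j + #{i | σ i = j}) * logMass q ξ ab j - w j * exp (logMass q ξ ab j)) := by
  have hqexp : ∀ j, qexp q (linearPredictor ξ ab j) = exp (logMass q ξ ab j) :=
    fun j => (exp_log (qexp_pos (hab j))).symm
  have hdata : ∑ i, Real.log (qexp q (ab.1 + ∑ k, ab.2 k * x i k)) =
      ∑ j, (#{i | σ i = j} : ℝ) * logMass q ξ ab j := by
    simp_rw [hσ]
    rw [← sum_fiberwise univ σ]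
    refine sum_congr rfl fun j _ => ?_
    rw [sum_congr rfl fun i hi => by rw [(mem_filter.mp hi).2], sum_const, nsmul_eq_mul]
    rfl
  unfold penLogLik
  change -(∑ j, w j * qexp q (linearPredictor ξ ab j)) + _ +
    κ * ∑ j, w j * Real.log (qexp q (linearPredictor ξ ab j)) = _
  simp only [hqexp, log_exp, hdata]
  rw [mul_sum, ← sum_neg_distrib, ← sum_add_distrib, ← sum_add_distrib]
  exact sum_congr rfl fun j _ => by ring

theorem additive_smoothing_estimator_exists_general
    (q κ : ℝ) (hκ : 0 < κ) (J p n : ℕ)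
    (ξ : Fin J → Fin p → ℝ)
    (w : Fin J → ℝ) (hw_pos : ∀ j, 0 < w j)
    (x : Fin n → Fin p → ℝ) (hx : ∀ i, ∃ j, x i = ξ j) :
    ∃ ab : ℝ × (Fin p → ℝ),
      (∀ j, 0 < 1 + (1 - q) * (ab.1 + ∑ i, ab.2 i * ξ j i)) ∧
      ∀ ab' : ℝ × (Fin p → ℝ),
        (∀ j, 0 < 1 + (1 - q) * (ab'.1 + ∑ i, ab'.2 i * ξ j i)) →
        penLogLik q κ w ξ x ab' ≤ penLogLik q κ w ξ x ab := by
  choose σ hσ using hx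
  set b : Fin J → ℝ := fun j => κ * w j + (Finset.univ.filter fun i => σ i = j).card
  have hb : ∀ j, 0 < b j := fun j =>
    add_pos_of_pos_of_nonneg (mul_pos hκ (hw_pos j)) (Nat.cast_nonneg _)
  have hcoercive : Tendsto (fun u : Fin J → ℝ => ∑ j, (b j * u j - w j * exp (u j)))
      (cocompact _) atBot :=
    tendsto_sum_apply_cocompact_atBot
      (fun j => tendsto_mul_sub_mul_exp_cocompact (hw_pos j) (hb j))
      fun j => bddAbove_range_mul_sub_mul_exp (hw_pos j) (hb j).le
  obtain ⟨_, ⟨ab, hab, rfl⟩, hmax⟩ :=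
    (by fun_prop : Continuous _).exists_isMaxOn_of_tendsto_cocompact hcoercive
      isClosed_image_logMass_paramSet ⟨_, mem_image_of_mem _ (zero_mem_paramSet (ξ := ξ))⟩
  refine ⟨ab, hab, fun ab' hab' => ?_⟩
  rw [penLogLik_eq_sum hσ hab, penLogLik_eq_sum hσ hab']
  exact hmax (mem_image_of_mem _ hab')

/-- existence of the additive-smoothing estimator: let `q ∈ ℝ`
and `κ > 0`, let `ξ_1, …, ξ_J ∈ ℝ^p` be distinct points not contained in any
affine hyperplane, let `p_1, …, p_J > 0` sum to `1`, and let
`x_1, …, x_n ∈ {ξ_1, …, ξ_J}`.  Then the penalized log-likelihood `L` attains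
its maximum on `Θ = {(α,β) : 1 + (1-q)(α+βᵀξ_j) > 0 ∀j}`. -/
theorem additive_smoothing_estimator_exists
    (q κ : ℝ) (hκ : 0 < κ) (J p n : ℕ)
    (ξ : Fin J → Fin p → ℝ) (hξ_distinct : Function.Injective ξ)
    (hξ_nohyp : ¬∃ (v : Fin p → ℝ) (c : ℝ), v ≠ 0 ∧ ∀ j, ∑ i, v i * ξ j i = c)
    (w : Fin J → ℝ) (hw_pos : ∀ j, 0 < w j) (hw_sum : ∑ j, w j = 1)
    (x : Fin n → Fin p → ℝ) (hx : ∀ i, ∃ j, x i = ξ j) :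
    ∃ ab : ℝ × (Fin p → ℝ),
      (∀ j, 0 < 1 + (1 - q) * (ab.1 + ∑ i, ab.2 i * ξ j i)) ∧
      ∀ ab' : ℝ × (Fin p → ℝ),
        (∀ j, 0 < 1 + (1 - q) * (ab'.1 + ∑ i, ab'.2 i * ξ j i)) →
        penLogLik q κ w ξ x ab' ≤ penLogLik q κ w ξ x ab :=
  additive_smoothing_estimator_exists_general q κ hκ J p n ξ w hw_pos x hx
end

section
/- Let n_0^*, n_1^*, n_2^* > 0 be real numbers, and define f(θ,φ) = −(θ+φ)/2 + n_0^* log θ + n_1^* log((θ+φ)/2) + n_2^* log φ for θ > 0, φ > 0. Then f attains its maximum over {(θ,φ) : θ > 0, φ > 0} uniquely at θ̂ = 2 n_0^* (n_0^* + n_1^* + n_2^*)/(n_0^* + n_2^*) and φ̂ = 2 n_2^* (n_0^* + n_1^* + n_2^*)/(n_0^* + n_2^*). -/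
/-!
With `N = n₀ + n₁ + n₂` and `(θ̂, φ̂)` the claimed maximizer, one has `(θ̂ + φ̂)/2 = N` and
`n₀/θ̂ = n₂/φ̂ = (n₀ + n₂)/(2N)`, so the tangent planes of the three logarithmic terms at
`θ̂`, `φ̂` and `N` add up to exactly `(θ + φ)/2 - N`, cancelling the linear term. Hence
`f(θ̂, φ̂) - f(θ, φ)` is a sum of three tangent-line gaps of concave functions `a log`, each
nonnegative and vanishing only at the point of tangency.
-/

open Real

noncomputable def logTangentGap (a s t : ℝ) : ℝ :=
  a * ((t - s) / s - (log t - log s))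

lemma logTangentGap_nonneg {a s t : ℝ} (ha : 0 ≤ a) (hs : 0 < s) (ht : 0 < t) :
    0 ≤ logTangentGap a s t := by
  have h := log_le_sub_one_of_pos (div_pos ht hs)
  rw [log_div ht.ne' hs.ne', div_sub_one hs.ne'] at h
  exact mul_nonneg ha (sub_nonneg.mpr h)

lemma logTangentGap_pos {a s t : ℝ} (ha : 0 < a) (hs : 0 < s) (ht : 0 < t) (hts : t ≠ s) :
    0 < logTangentGap a s t := by
  have hne : t / s ≠ 1 := fun h => hts ((div_eq_one_iff_eq hs.ne').mp h)
  have h := log_lt_sub_one_of_pos (div_pos ht hs) hne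
  rw [log_div ht.ne' hs.ne', div_sub_one hs.ne'] at h
  exact mul_pos ha (sub_pos.mpr h)

noncomputable def threePointObjective (n0 n1 n2 θ φ : ℝ) : ℝ :=
  -(θ + φ) / 2 + n0 * log θ + n1 * log ((θ + φ) / 2) + n2 * log φ

lemma threePointObjective_sub_eq_sum_logTangentGap {n0 n1 n2 : ℝ}
    (h0 : 0 < n0) (h1 : 0 ≤ n1) (h2 : 0 < n2) (θ φ : ℝ) :
    threePointObjective n0 n1 n2 (2 * n0 * (n0 + n1 + n2) / (n0 + n2))
        (2 * n2 * (n0 + n1 + n2) / (n0 + n2)) - threePointObjective n0 n1 n2 θ φ =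
      logTangentGap n0 (2 * n0 * (n0 + n1 + n2) / (n0 + n2)) θ +
        logTangentGap n2 (2 * n2 * (n0 + n1 + n2) / (n0 + n2)) φ +
        logTangentGap n1 (n0 + n1 + n2) ((θ + φ) / 2) := by
  have hc : n0 + n2 ≠ 0 := by positivity
  have hN : n0 + n1 + n2 ≠ 0 := by positivity
  have hmid : (2 * n0 * (n0 + n1 + n2) / (n0 + n2) + 2 * n2 * (n0 + n1 + n2) / (n0 + n2)) / 2 =
      n0 + n1 + n2 := by
    field_simp
  unfold threePointObjective logTangentGap
  rw [hmid]
  field_simp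
  ring

/-- Example on the three-point `q = 0` model: for real numbers
`n_0*, n_1*, n_2* > 0`, the function
`f(θ,φ) = -(θ+φ)/2 + n_0* log θ + n_1* log((θ+φ)/2) + n_2* log φ` on
`{θ > 0, φ > 0}` attains its maximum uniquely at
`θ̂ = 2 n_0* (n_0*+n_1*+n_2*)/(n_0*+n_2*)` and
`φ̂ = 2 n_2* (n_0*+n_1*+n_2*)/(n_0*+n_2*)`. -/
theorem three_point_additive_smoothing_maximizer
    (n0 n1 n2 : ℝ) (h0 : 0 < n0) (h1 : 0 < n1) (h2 : 0 < n2) :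
    (∀ θ φ : ℝ, 0 < θ → 0 < φ →
        -(θ + φ) / 2 + n0 * Real.log θ + n1 * Real.log ((θ + φ) / 2) +
            n2 * Real.log φ ≤
          -(2 * n0 * (n0 + n1 + n2) / (n0 + n2) +
                2 * n2 * (n0 + n1 + n2) / (n0 + n2)) / 2 +
            n0 * Real.log (2 * n0 * (n0 + n1 + n2) / (n0 + n2)) +
            n1 * Real.log ((2 * n0 * (n0 + n1 + n2) / (n0 + n2) +
                2 * n2 * (n0 + n1 + n2) / (n0 + n2)) / 2) +
            n2 * Real.log (2 * n2 * (n0 + n1 + n2) / (n0 + n2))) ∧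
      ∀ θ φ : ℝ, 0 < θ → 0 < φ →
        (-(θ + φ) / 2 + n0 * Real.log θ + n1 * Real.log ((θ + φ) / 2) +
            n2 * Real.log φ =
          -(2 * n0 * (n0 + n1 + n2) / (n0 + n2) +
                2 * n2 * (n0 + n1 + n2) / (n0 + n2)) / 2 +
            n0 * Real.log (2 * n0 * (n0 + n1 + n2) / (n0 + n2)) +
            n1 * Real.log ((2 * n0 * (n0 + n1 + n2) / (n0 + n2) +
                2 * n2 * (n0 + n1 + n2) / (n0 + n2)) / 2) +
            n2 * Real.log (2 * n2 * (n0 + n1 + n2) / (n0 + n2))) →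
        θ = 2 * n0 * (n0 + n1 + n2) / (n0 + n2) ∧
        φ = 2 * n2 * (n0 + n1 + n2) / (n0 + n2) := by
  set A := 2 * n0 * (n0 + n1 + n2) / (n0 + n2)
  set B := 2 * n2 * (n0 + n1 + n2) / (n0 + n2)
  have hA : 0 < A := by positivity
  have hB : 0 < B := by positivity
  have hN : 0 < n0 + n1 + n2 := by positivity
  have hgap := threePointObjective_sub_eq_sum_logTangentGap h0 h1.le h2
  have gaps_nonneg (θ φ : ℝ) (hθ : 0 < θ) (hφ : 0 < φ) :
      0 ≤ logTangentGap n0 A θ ∧ 0 ≤ logTangentGap n2 B φ ∧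
        0 ≤ logTangentGap n1 (n0 + n1 + n2) ((θ + φ) / 2) :=
    ⟨logTangentGap_nonneg h0.le hA hθ, logTangentGap_nonneg h2.le hB hφ,
      logTangentGap_nonneg h1.le hN (by positivity : 0 < (θ + φ) / 2)⟩
  refine ⟨fun θ φ hθ hφ => ?_, fun θ φ hθ hφ heq => ?_⟩
  · change threePointObjective n0 n1 n2 θ φ ≤ threePointObjective n0 n1 n2 A B
    obtain ⟨g0, g2, g1⟩ := gaps_nonneg θ φ hθ hφ
    linarith [hgap θ φ]
  · change threePointObjective n0 n1 n2 θ φ = threePointObjective n0 n1 n2 A B at heq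
    obtain ⟨g0, g2, g1⟩ := gaps_nonneg θ φ hθ hφ
    constructor
    · by_contra hne
      linarith [hgap θ φ, logTangentGap_pos h0 hA hθ hne]
    · by_contra hne
      linarith [hgap θ φ, logTangentGap_pos h2 hB hφ hne]
end
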